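/- arXiv:2402.18079 — 8 statements merged into one kernel-verified Lean document; each statement's English description precedes it below -/
import Mathlib

section
/- Let n ≥ 2 and let φ₁,…,φ_n ∈ ℂ be pairwise distinct. Define the (n+1)×(n+1) complex matrix M(φ) by: M_{1,1} = 1, M_{1,c} = 0 for 2 ≤ c ≤ n+1, M_{r,1} = e_{r−1}(φ) for 2 ≤ r ≤ n+1, and M_{r,c} = e_{r−2}(φ^{(c−1)}) for 2 ≤ r, c ≤ n+1. Then M(φ) is invertible and its inverse N satisfies: N_{1,1} = 1, N_{1,c} = 0 for 2 ≤ c ≤ n+1, and N_{i+1,j} = (−1)^{j} · φ_i^{n+1−j} / ∏_{k≠i}(φ_i − φ_k) for 1 ≤ i ≤ n and 1 ≤ j ≤ n+1. -/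
open Finset

/-!
With alternating signs, column `0` of `M(φ)` is the coefficient vector of `∏ₖ (X - φₖ)` and
column `c + 1` that of `-∏_{k ≠ c} (X - φₖ)` (Vieta). Row `i + 1` of the claimed inverse
evaluates such a polynomial at `φᵢ` and divides by `∏_{k ≠ i} (φᵢ - φₖ)`, so it kills column `0`
and, by the Lagrange basis property, picks out column `i + 1`.
-/

theorem Finset.prod_sub_eq_sum_esymm {ι R : Type*} [CommRing R] (s : Finset ι) (f : ι → R)
    (x : R) :
    ∏ k ∈ s, (x - f k) =
      ∑ j ∈ range (#s + 1), (-1) ^ j * (s.val.map f).esymm j * x ^ (#s - j) := by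
  simpa [Polynomial.eval_prod, Polynomial.eval_finsetSum, mul_assoc] using
    congrArg (Polynomial.eval x) (Multiset.prod_X_sub_X_eq_sum_esymm (s.val.map f))

section

variable {K : Type*} [Field K] {n : ℕ} (φ : Fin n → K)

def esymmMatrix : Matrix (Fin (n + 1)) (Fin (n + 1)) K :=
  Matrix.of fun r c => Fin.cases ((univ.val.map φ).esymm r)
    (fun c' => Fin.cases 0 (fun r' => ((univ.erase c').val.map φ).esymm r') r) c

def esymmMatrixInv : Matrix (Fin (n + 1)) (Fin (n + 1)) K :=
  Matrix.of <| Fin.cons (Pi.single 0 1) fun i j =>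
    (-1) ^ (j.val + 1) * φ i ^ (n - j.val) / ∏ k ∈ univ.erase i, (φ i - φ k)

theorem esymmMatrix_zero : esymmMatrix φ 0 = Pi.single 0 1 := by
  ext c
  induction c using Fin.cases with
  | zero => simp [esymmMatrix, Multiset.esymm]
  | succ c => simp [esymmMatrix]

theorem sum_alternating_mul_esymmMatrix_zero (x : K) :
    ∑ r : Fin (n + 1), (-1) ^ (r : ℕ) * x ^ (n - r) * esymmMatrix φ r 0 = ∏ k, (x - φ k) := by
  rw [prod_sub_eq_sum_esymm, card_univ, Fintype.card_fin,
    ← Fin.sum_univ_eq_sum_range (fun j => (-1) ^ j * (univ.val.map φ).esymm j * x ^ (n - j))]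
  refine sum_congr rfl fun r _ => ?_
  simp only [esymmMatrix, Matrix.of_apply, Fin.cases_zero]
  ring

theorem sum_alternating_mul_esymmMatrix_succ (x : K) (c : Fin n) :
    ∑ r : Fin (n + 1), (-1) ^ (r : ℕ) * x ^ (n - r) * esymmMatrix φ r c.succ =
      -∏ k ∈ univ.erase c, (x - φ k) := by
  have hcard : #(univ.erase c) + 1 = n := by
    rw [card_erase_of_mem (mem_univ c), card_univ, Fintype.card_fin]; have := c.pos; omega
  rw [prod_sub_eq_sum_esymm, hcard, ← sum_neg_distrib, Fin.sum_univ_succ,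
    ← Fin.sum_univ_eq_sum_range]
  simp only [esymmMatrix, Matrix.of_apply, Fin.cases_succ, Fin.cases_zero, mul_zero, zero_add,
    Fin.val_succ]
  refine sum_congr rfl fun r _ => ?_
  rw [show n - (r + 1) = #(univ.erase c) - r by omega, pow_succ]
  ring

theorem esymmMatrixInv_mul_apply_succ (A : Matrix (Fin (n + 1)) (Fin (n + 1)) K) (i : Fin n)
    (c : Fin (n + 1)) :
    (esymmMatrixInv φ * A) i.succ c =
      -(∑ r : Fin (n + 1), (-1) ^ (r : ℕ) * φ i ^ (n - r) * A r c) /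
        ∏ k ∈ univ.erase i, (φ i - φ k) := by
  simp only [Matrix.mul_apply, esymmMatrixInv, Matrix.of_apply, Fin.cons_succ,
    ← sum_neg_distrib, sum_div]
  refine sum_congr rfl fun r _ => ?_
  ring

theorem esymmMatrixInv_mul_apply_zero (A : Matrix (Fin (n + 1)) (Fin (n + 1)) K)
    (c : Fin (n + 1)) : (esymmMatrixInv φ * A) 0 c = A 0 c := by
  simp [Matrix.mul_apply, esymmMatrixInv, Pi.single_apply]

theorem prod_erase_sub_ne_zero {φ : Fin n → K} (hφ : Function.Injective φ) (i : Fin n) :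
    ∏ k ∈ univ.erase i, (φ i - φ k) ≠ 0 :=
  prod_ne_zero_iff.2 fun _ hk => sub_ne_zero.2 (hφ.ne (ne_of_mem_erase hk).symm)

theorem esymmMatrixInv_mul_esymmMatrix {φ : Fin n → K} (hφ : Function.Injective φ) :
    esymmMatrixInv φ * esymmMatrix φ = 1 := by
  ext r c
  induction r using Fin.cases with
  | zero =>
    rw [esymmMatrixInv_mul_apply_zero, esymmMatrix_zero, Matrix.one_eq_pi_single]
  | succ i =>
    rw [esymmMatrixInv_mul_apply_succ]
    induction c using Fin.cases with
    | zero =>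
      rw [sum_alternating_mul_esymmMatrix_zero, prod_eq_zero (mem_univ i) (sub_self _), neg_zero,
        zero_div, Matrix.one_apply_ne (Fin.succ_ne_zero i)]
    | succ c =>
      rw [sum_alternating_mul_esymmMatrix_succ, neg_neg]
      by_cases h : i = c
      · rw [h, Matrix.one_apply_eq]
        exact div_self (prod_erase_sub_ne_zero hφ c)
      · rw [prod_eq_zero (mem_erase.2 ⟨h, mem_univ i⟩) (sub_self _), zero_div,
          Matrix.one_apply_ne (Fin.succ_injective _ |>.ne h)]

theorem eq_esymmMatrix (M : Matrix (Fin (n + 1)) (Fin (n + 1)) K)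
    (hM00 : M 0 0 = 1)
    (hM0c : ∀ c : Fin (n + 1), c ≠ 0 → M 0 c = 0)
    (hMr0 : ∀ i : Fin n, M i.succ 0 = (univ.val.map φ).esymm (i.val + 1))
    (hMrc : ∀ i c : Fin n, M i.succ c.succ = ((univ.erase c).val.map φ).esymm i.val) :
    M = esymmMatrix φ := by
  ext r c
  induction r using Fin.cases with
  | zero =>
    rw [esymmMatrix_zero, Pi.single_apply]
    split_ifs with hc
    · rw [hc, hM00]
    · exact hM0c c hc
  | succ i =>
    induction c using Fin.cases with
    | zero => exact hMr0 i
    | succ c => exact hMrc i c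

end

theorem matrix_M_inverse_general (n : ℕ) (φ : Fin n → ℂ) (hφ : Function.Injective φ)
    (M : Matrix (Fin (n + 1)) (Fin (n + 1)) ℂ)
    (hM00 : M 0 0 = 1)
    (hM0c : ∀ c : Fin (n + 1), c ≠ 0 → M 0 c = 0)
    (hMr0 : ∀ i : Fin n, M i.succ 0 = (univ.val.map φ).esymm (i.val + 1))
    (hMrc : ∀ i c : Fin n, M i.succ c.succ = ((univ.erase c).val.map φ).esymm i.val) :
    IsUnit M
    ∧ M⁻¹ 0 0 = 1
    ∧ (∀ c : Fin (n + 1), c ≠ 0 → M⁻¹ 0 c = 0)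
    ∧ (∀ (i : Fin n) (j : Fin (n + 1)),
        M⁻¹ i.succ j = (-1) ^ (j.val + 1) * (φ i) ^ (n - j.val)
          / ∏ k ∈ univ.erase i, (φ i - φ k)) := by
  have hNM := esymmMatrixInv_mul_esymmMatrix hφ
  obtain rfl := eq_esymmMatrix φ M hM00 hM0c hMr0 hMrc
  rw [Matrix.inv_eq_left_inv hNM]
  exact ⟨(Matrix.isUnit_iff_isUnit_det _).2 (Matrix.isUnit_det_of_left_inverse hNM),
    by simp [esymmMatrixInv], fun c hc => by simp [esymmMatrixInv, hc], fun i j => rfl⟩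

/-- The matrix `M(φ)` built from elementary symmetric polynomials of `φ` (and of `φ` with
one entry removed) is invertible, with explicit inverse entries
`N_{i+1,j} = (−1)^j φ_i^{n+1−j} / ∏_{k≠i}(φ_i − φ_k)` (in `1`-indexed notation). -/
theorem matrix_M_inverse (n : ℕ) (hn : 2 ≤ n) (φ : Fin n → ℂ) (hφ : Function.Injective φ)
    (M : Matrix (Fin (n + 1)) (Fin (n + 1)) ℂ)
    (hM00 : M 0 0 = 1)
    (hM0c : ∀ c : Fin (n + 1), c ≠ 0 → M 0 c = 0)
    (hMr0 : ∀ i : Fin n, M i.succ 0 = (univ.val.map φ).esymm (i.val + 1))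
    (hMrc : ∀ i c : Fin n, M i.succ c.succ = ((univ.erase c).val.map φ).esymm i.val) :
    IsUnit M
    ∧ M⁻¹ 0 0 = 1
    ∧ (∀ c : Fin (n + 1), c ≠ 0 → M⁻¹ 0 c = 0)
    ∧ (∀ (i : Fin n) (j : Fin (n + 1)),
        M⁻¹ i.succ j = (-1) ^ (j.val + 1) * (φ i) ^ (n - j.val)
          / ∏ k ∈ univ.erase i, (φ i - φ k)) :=
  matrix_M_inverse_general n φ hφ M hM00 hM0c hMr0 hMrc
end

section
/- Let n ≥ 1 and let a₁,…,a_{n+1} ∈ ℂ be pairwise distinct. Let x_k, y_k : ℂ → ℂ (1 ≤ k ≤ n+1) be holomorphic and satisfy the complexified Neumann system: x_k′(τ) = y_k(τ), y_k′(τ) = −(Γ(τ) + a_k) x_k(τ) with Γ(τ) = ∑_{i=1}^{n+1}(y_i(τ)² − a_i x_i(τ)²), together with ∑_k x_k(τ)² ≡ 1 and ∑_k x_k(τ) y_k(τ) ≡ 0. For t ∈ ℝ let U(t,ξ), V(t,ξ), W(t,ξ) be the Moser polynomials 𝐔(ξ), 𝐕(ξ), 𝐖(ξ) built from the vectors x(−√−1·t),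 y(−√−1·t) (the imaginary-time substitution τ = −√−1·t). Then for every ξ ∈ ℂ and every t ∈ ℝ: ∂ₜU(t,ξ) = −2V(t,ξ), ∂ₜV(t,ξ) = −(ξ + w₁(t) − u₁(t))U(t,ξ) + W(t,ξ), and ∂ₜW(t,ξ) = 2(ξ + w₁(t) − u₁(t))V(t,ξ), where u₁(t) is the coefficient of ξ^{n−1} in U(t,ξ) and w₁(t) the coefficient of ξⁿ in W(t,ξ); i.e. the Moser transform of a Neumann solution solves the Neumann–Moser system. -/
open Polynomial Finset

/-!
Each of `U`, `V`, `W` is, up to the constant `f`, a combination `∑ z_j ∏_{k ≠ j} (ξ - a_k)` whose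
coefficients `z_j` are quadratic in `x, y`, so differentiating along the Neumann flow only
differentiates the `z_j`. The one identity needed is `a_j ∏_{k ≠ j} (ξ - a_k) =
ξ ∏_{k ≠ j} (ξ - a_k) - f(ξ)`: it turns the factor `Γ + a_j` of the flow into `Γ + ξ`, at the cost
of `f(ξ)` times `∑ x_j² = 1` or `∑ x_j y_j = 0`. Comparing coefficients gives `w₁ - u₁ = Γ`, and
the imaginary time `τ = -√-1·t` supplies the factors `∓√-1` that turn the complex-time equations
into the stated ones.
-/

theorem coeff_prod_X_sub_C_of_card_eq {ι R : Type*} [Fintype ι] [CommRing R] {n : ℕ}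
    (hι : Fintype.card ι = n + 1) (a : ι → R) :
    (∏ j, (X - C (a j))).coeff n = -∑ j, a j := by
  simpa [hι] using prod_X_sub_C_coeff_card_pred univ a (by simp [hι])

section MoserPoly

variable {ι R : Type*} [Fintype ι] [DecidableEq ι] [CommRing R]

/-- `𝐔 = moserPoly a (x²)`, `𝐕 = √-1 · moserPoly a (x y)` and `𝐖 = f + moserPoly a (y²)`. -/
noncomputable def moserPoly (a z : ι → R) : R[X] :=
  ∑ j, C (z j) * ∏ k ∈ univ.erase j, (X - C (a k))

theorem eval_moserPoly (a z : ι → R) (ξ : R) :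
    (moserPoly a z).eval ξ = ∑ j, z j * ∏ k ∈ univ.erase j, (ξ - a k) := by
  simp [moserPoly, eval_finsetSum, eval_prod]

theorem coeff_moserPoly_of_card_eq {n : ℕ} (hι : Fintype.card ι = n + 1) (a z : ι → R) :
    (moserPoly a z).coeff n = ∑ j, z j := by
  nontriviality R
  refine (finsetSum_coeff _ _ _).trans (sum_congr rfl fun j _ => ?_)
  have hdeg : (∏ k ∈ univ.erase j, (X - C (a k))).natDegree = n := by
    simp [card_erase_of_mem, hι]
  rw [coeff_C_mul, ← hdeg, coeff_natDegree, (monic_prod_X_sub_C a _).leadingCoeff, mul_one]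

theorem coeff_moserPoly_of_card_eq_pred {n : ℕ} (hι : Fintype.card ι = n + 1) (hn : 1 ≤ n)
    (a z : ι → R) :
    (moserPoly a z).coeff (n - 1) = ∑ j, a j * z j - (∑ j, a j) * ∑ j, z j := by
  rw [mul_sum, ← sum_sub_distrib]
  refine (finsetSum_coeff _ _ _).trans (sum_congr rfl fun j _ => ?_)
  have hcard : #(univ.erase j) = n := by simp [card_erase_of_mem, hι]
  have h := prod_X_sub_C_coeff_card_pred (univ.erase j) a (by omega)
  rw [hcard] at h
  rw [coeff_C_mul, h, sum_erase_eq_sub (mem_univ j)]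
  ring

theorem moserPoly_sub (a z w : ι → R) :
    moserPoly a (fun j => z j - w j) = moserPoly a z - moserPoly a w := by
  simp only [moserPoly, C_sub, sub_mul, sum_sub_distrib]

theorem moserPoly_const_mul (a z : ι → R) (c : R) :
    moserPoly a (fun j => c * z j) = C c * moserPoly a z := by
  simp only [moserPoly, C_mul, mul_sum, mul_assoc]

theorem moserPoly_const_add_mul (a z : ι → R) (γ : R) :
    moserPoly a (fun j => (γ + a j) * z j)
      = (C γ + X) * moserPoly a z - C (∑ j, z j) * ∏ j, (X - C (a j)) := by
  simp only [moserPoly, mul_sum, map_sum, sum_mul, ← sum_sub_distrib]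
  refine sum_congr rfl fun j _ => ?_
  rw [← mul_prod_erase univ (fun k => X - C (a k)) (mem_univ j), C_mul, C_add]
  ring

end MoserPoly

section Derivatives

variable {ι 𝕜 : Type*} [Fintype ι] [DecidableEq ι] [NontriviallyNormedField 𝕜]

theorem hasDerivAt_eval_moserPoly (a : ι → 𝕜) (ξ : 𝕜) {z : ι → 𝕜 → 𝕜} {z' : ι → 𝕜} {τ : 𝕜}
    (hz : ∀ j, HasDerivAt (z j) (z' j) τ) :
    HasDerivAt (fun σ => (moserPoly a fun j => z j σ).eval ξ) ((moserPoly a z').eval ξ) τ := by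
  simp only [eval_moserPoly]
  exact HasDerivAt.fun_sum fun j _ => (hz j).mul_const _

variable {a : ι → 𝕜} {x y : ι → 𝕜 → 𝕜} {τ γ : 𝕜} (ξ : 𝕜)

theorem hasDerivAt_eval_moserPoly_x_sq (hx : ∀ k, HasDerivAt (x k) (y k τ) τ) :
    HasDerivAt (fun σ => (moserPoly a fun j => x j σ ^ 2).eval ξ)
      (2 * (moserPoly a fun j => x j τ * y j τ).eval ξ) τ := by
  rw [← eval_C (a := (2 : 𝕜)) (x := ξ), ← eval_mul, ← moserPoly_const_mul]
  refine hasDerivAt_eval_moserPoly a ξ fun j => ?_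
  exact ((hx j).pow 2).congr_deriv (by push_cast; ring)

theorem hasDerivAt_eval_moserPoly_x_mul_y (hx : ∀ k, HasDerivAt (x k) (y k τ) τ)
    (hy : ∀ k, HasDerivAt (y k) (-(γ + a k) * x k τ) τ) (hc1 : ∑ k, x k τ ^ 2 = 1) :
    HasDerivAt (fun σ => (moserPoly a fun j => x j σ * y j σ).eval ξ)
      ((∏ k, (ξ - a k)) + (moserPoly a fun j => y j τ ^ 2).eval ξ
        - (ξ + γ) * (moserPoly a fun j => x j τ ^ 2).eval ξ) τ := by
  have h := hasDerivAt_eval_moserPoly a ξ (z' := fun j => y j τ ^ 2 - (γ + a j) * x j τ ^ 2)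
    fun j => ((hx j).mul (hy j)).congr_deriv (by ring)
  rw [moserPoly_sub, moserPoly_const_add_mul, hc1] at h
  refine h.congr_deriv ?_
  simp only [eval_sub, eval_mul, eval_add, eval_C, eval_X, eval_prod]
  ring

theorem hasDerivAt_eval_moserPoly_y_sq (hy : ∀ k, HasDerivAt (y k) (-(γ + a k) * x k τ) τ)
    (hc2 : ∑ k, x k τ * y k τ = 0) :
    HasDerivAt (fun σ => (moserPoly a fun j => y j σ ^ 2).eval ξ)
      (-2 * (ξ + γ) * (moserPoly a fun j => x j τ * y j τ).eval ξ) τ := by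
  have h := hasDerivAt_eval_moserPoly a ξ (z' := fun j => -2 * ((γ + a j) * (x j τ * y j τ)))
    fun j => ((hy j).pow 2).congr_deriv (by push_cast; ring)
  rw [moserPoly_const_mul, moserPoly_const_add_mul, hc2] at h
  refine h.congr_deriv ?_
  simp only [eval_sub, eval_mul, eval_add, eval_C, eval_X]
  ring

end Derivatives

theorem HasDerivAt.comp_const_mul_ofReal {g : ℂ → ℂ} {g' c : ℂ} {t : ℝ}
    (h : HasDerivAt g g' (c * t)) : HasDerivAt (fun s : ℝ => g (c * s)) (c * g') t := by
  have hlin : HasDerivAt (fun σ : ℂ => c * σ) c t := by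
    simpa using (hasDerivAt_id (t : ℂ)).const_mul c
  simpa [mul_comm] using (h.comp (t : ℂ) hlin).comp_ofReal

theorem moser_transform_solves_neumann_moser_general (n : ℕ) (hn : 1 ≤ n)
    (a : Fin (n + 1) → ℂ)
    (x y : Fin (n + 1) → ℂ → ℂ)
    (hxdiff : ∀ k, Differentiable ℂ (x k)) (hydiff : ∀ k, Differentiable ℂ (y k))
    (Γ : ℂ → ℂ) (hΓ : ∀ τ, Γ τ = ∑ i, ((y i τ) ^ 2 - a i * (x i τ) ^ 2))
    (hx' : ∀ k τ, deriv (x k) τ = y k τ)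
    (hy' : ∀ k τ, deriv (y k) τ = -(Γ τ + a k) * x k τ)
    (hc1 : ∀ τ, ∑ k, (x k τ) ^ 2 = 1) (hc2 : ∀ τ, ∑ k, x k τ * y k τ = 0)
    (U V W : ℝ → Polynomial ℂ)
    (hU : ∀ t : ℝ, U t = ∑ j, C ((x j (-Complex.I * (t : ℂ))) ^ 2)
        * ∏ k ∈ univ.erase j, (X - C (a k)))
    (hV : ∀ t : ℝ, V t = C Complex.I * ∑ j,
        C (x j (-Complex.I * (t : ℂ)) * y j (-Complex.I * (t : ℂ)))
          * ∏ k ∈ univ.erase j, (X - C (a k)))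
    (hW : ∀ t : ℝ, W t = (∏ j, (X - C (a j))) + ∑ j, C ((y j (-Complex.I * (t : ℂ))) ^ 2)
        * ∏ k ∈ univ.erase j, (X - C (a k))) :
    ∀ (ξ : ℂ) (t : ℝ),
      deriv (fun s : ℝ => (U s).eval ξ) t = -2 * (V t).eval ξ
      ∧ deriv (fun s : ℝ => (V s).eval ξ) t
          = -(ξ + (W t).coeff n - (U t).coeff (n - 1)) * (U t).eval ξ + (W t).eval ξ
      ∧ deriv (fun s : ℝ => (W s).eval ξ) t
          = 2 * (ξ + (W t).coeff n - (U t).coeff (n - 1)) * (V t).eval ξ := by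
  intro ξ t
  have hx : ∀ σ k, HasDerivAt (x k) (y k σ) σ := fun σ k => hx' k σ ▸ (hxdiff k σ).hasDerivAt
  have hy : ∀ σ k, HasDerivAt (y k) (-(Γ σ + a k) * x k σ) σ :=
    fun σ k => hy' k σ ▸ (hydiff k σ).hasDerivAt
  have hU' : ∀ s : ℝ, U s = moserPoly a fun j => x j (-Complex.I * s) ^ 2 := hU
  have hV' : ∀ s : ℝ, V s = C Complex.I * moserPoly a fun j =>
      x j (-Complex.I * s) * y j (-Complex.I * s) := hV
  have hW' : ∀ s : ℝ, W s = (∏ j, (X - C (a j))) + moserPoly a fun j => y j (-Complex.I * s) ^ 2 :=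
    hW
  have hshift : (W t).coeff n - (U t).coeff (n - 1) = Γ (-Complex.I * t) := by
    have hcard : Fintype.card (Fin (n + 1)) = n + 1 := Fintype.card_fin _
    rw [hW', hU', coeff_add, coeff_prod_X_sub_C_of_card_eq hcard, coeff_moserPoly_of_card_eq hcard,
      coeff_moserPoly_of_card_eq_pred hcard hn, hc1, hΓ, sum_sub_distrib]
    ring
  rw [add_sub_assoc, hshift]
  simp only [hU', hV', hW', eval_add, eval_mul, eval_C, eval_prod, eval_sub, eval_X]
  refine ⟨?_, ?_, ?_⟩
  · rw [(hasDerivAt_eval_moserPoly_x_sq ξ (hx _)).comp_const_mul_ofReal.deriv]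
    ring
  · rw [((hasDerivAt_eval_moserPoly_x_mul_y ξ (hx _) (hy _) (hc1 _)).const_mul
      Complex.I).comp_const_mul_ofReal.deriv]
    rw [← mul_assoc, neg_mul, Complex.I_mul_I]
    ring
  · rw [((hasDerivAt_eval_moserPoly_y_sq ξ (hy _) (hc2 _)).const_add
      _).comp_const_mul_ofReal.deriv]
    ring

/-- The Moser transform of a (holomorphic) solution of the complexified Neumann system,
taken in imaginary time `τ = −√−1·t`, solves the Neumann–Moser system. -/
theorem moser_transform_solves_neumann_moser (n : ℕ) (hn : 1 ≤ n)
    (a : Fin (n + 1) → ℂ) (ha : Function.Injective a)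
    (x y : Fin (n + 1) → ℂ → ℂ)
    (hxdiff : ∀ k, Differentiable ℂ (x k)) (hydiff : ∀ k, Differentiable ℂ (y k))
    (Γ : ℂ → ℂ) (hΓ : ∀ τ, Γ τ = ∑ i, ((y i τ) ^ 2 - a i * (x i τ) ^ 2))
    (hx' : ∀ k τ, deriv (x k) τ = y k τ)
    (hy' : ∀ k τ, deriv (y k) τ = -(Γ τ + a k) * x k τ)
    (hc1 : ∀ τ, ∑ k, (x k τ) ^ 2 = 1) (hc2 : ∀ τ, ∑ k, x k τ * y k τ = 0)
    (U V W : ℝ → Polynomial ℂ)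
    (hU : ∀ t : ℝ, U t = ∑ j, C ((x j (-Complex.I * (t : ℂ))) ^ 2)
        * ∏ k ∈ univ.erase j, (X - C (a k)))
    (hV : ∀ t : ℝ, V t = C Complex.I * ∑ j,
        C (x j (-Complex.I * (t : ℂ)) * y j (-Complex.I * (t : ℂ)))
          * ∏ k ∈ univ.erase j, (X - C (a k)))
    (hW : ∀ t : ℝ, W t = (∏ j, (X - C (a j))) + ∑ j, C ((y j (-Complex.I * (t : ℂ))) ^ 2)
        * ∏ k ∈ univ.erase j, (X - C (a k))) :
    ∀ (ξ : ℂ) (t : ℝ),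
      deriv (fun s : ℝ => (U s).eval ξ) t = -2 * (V t).eval ξ
      ∧ deriv (fun s : ℝ => (V s).eval ξ) t
          = -(ξ + (W t).coeff n - (U t).coeff (n - 1)) * (U t).eval ξ + (W t).eval ξ
      ∧ deriv (fun s : ℝ => (W s).eval ξ) t
          = 2 * (ξ + (W t).coeff n - (U t).coeff (n - 1)) * (V t).eval ξ :=
  moser_transform_solves_neumann_moser_general n hn a x y hxdiff hydiff Γ hΓ hx' hy' hc1 hc2 U V W
    hU hV hW
end

section
/- Let (u,v,w) be a solution of the Neumann–Moser system of dimension n. Then for every ξ ∈ ℂ the function t ↦ U(t,ξ)·W(t,ξ) + V(t,ξ)² has identically vanishing derivative; consequently each coefficient h_k(t) of ξ^{2n+1−k} (1 ≤ k ≤ 2n+1) in the monic degree-(2n+1) polynomial U(t,ξ)W(t,ξ) + V(t,ξ)² is a constant function of t. -/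
/-!
Differentiating along the flow, `(UW + V²)' = -2VW + U·2aV + 2V(-aU + W) = 0` with
`a = ξ + w₁ - u₁`, so `UW + V²` is constant in `t` for each `ξ`. Two polynomials in `ξ` over the
infinite field `ℂ` that agree at every point have the same coefficients, hence each `h_k` is
constant.
-/

open Finset Polynomial

theorem deriv_mul_add_sq_eq_zero {𝕜 𝔸 : Type*} [NontriviallyNormedField 𝕜] [NormedCommRing 𝔸]
    [NormedAlgebra 𝕜 𝔸] {U V W : 𝕜 → 𝔸} {a : 𝔸} {t : 𝕜}
    (hU : DifferentiableAt 𝕜 U t) (hV : DifferentiableAt 𝕜 V t) (hW : DifferentiableAt 𝕜 W t)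
    (hU' : deriv U t = -2 * V t) (hV' : deriv V t = -a * U t + W t)
    (hW' : deriv W t = 2 * a * V t) :
    deriv (fun s => U s * W s + V s ^ 2) t = 0 := by
  rw [((hU.hasDerivAt.fun_mul hW.hasDerivAt).fun_add (hV.hasDerivAt.fun_pow 2)).deriv, hU', hV',
    hW']
  ring

theorem differentiable_sum_mul {ι 𝕜 𝔸 : Type*} [NontriviallyNormedField 𝕜] [NormedRing 𝔸]
    [NormedAlgebra 𝕜 𝔸] {s : Finset ι} {c : ι → 𝕜 → 𝔸}
    (hc : ∀ i ∈ s, Differentiable 𝕜 (c i)) (p : ι → 𝔸) :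
    Differentiable 𝕜 fun t => ∑ i ∈ s, c i t * p i :=
  Differentiable.fun_sum fun i hi => (hc i hi).mul_const _

theorem coeff_sum_C_mul_X_pow_sub {R : Type*} [Semiring R] {m k : ℕ} (hk : k ∈ Icc 1 m)
    (a : ℕ → R) : (∑ i ∈ Icc 1 m, C (a i) * X ^ (m - i)).coeff (m - k) = a k := by
  rw [finsetSum_coeff, Finset.sum_eq_single k]
  · rw [coeff_C_mul_X_pow, if_pos rfl]
  · intro i hi hik
    rw [coeff_C_mul_X_pow, if_neg]
    simp only [Finset.mem_Icc] at hi hk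
    omega
  · exact fun hk' => absurd hk hk'

theorem eq_of_forall_sum_mul_pow_sub_eq {R : Type*} [CommRing R] [IsDomain R] [Infinite R]
    {m : ℕ} {a b : ℕ → R}
    (h : ∀ x : R, ∑ i ∈ Icc 1 m, a i * x ^ (m - i) = ∑ i ∈ Icc 1 m, b i * x ^ (m - i))
    {k : ℕ} (hk : k ∈ Icc 1 m) : a k = b k := by
  have hpoly : ∑ i ∈ Icc 1 m, C (a i) * X ^ (m - i) = ∑ i ∈ Icc 1 m, C (b i) * X ^ (m - i) :=
    Polynomial.funext fun x => by simpa [eval_finsetSum] using h x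
  rw [← coeff_sum_C_mul_X_pow_sub hk a, hpoly, coeff_sum_C_mul_X_pow_sub hk b]

theorem neumann_moser_integrals_constant_general (n : ℕ) (u v w : ℕ → ℝ → ℂ)
    (hu : ∀ i ∈ Finset.Icc 1 n, Differentiable ℝ (u i))
    (hv : ∀ i ∈ Finset.Icc 1 n, Differentiable ℝ (v i))
    (hw : ∀ i ∈ Finset.Icc 1 (n + 1), Differentiable ℝ (w i))
    (U V W : ℝ → ℂ → ℂ)
    (hU : ∀ t ξ, U t ξ = ξ ^ n + ∑ i ∈ Finset.Icc 1 n, u i t * ξ ^ (n - i))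
    (hV : ∀ t ξ, V t ξ = ∑ i ∈ Finset.Icc 1 n, v i t * ξ ^ (n - i))
    (hW : ∀ t ξ, W t ξ = ξ ^ (n + 1) + ∑ i ∈ Finset.Icc 1 (n + 1), w i t * ξ ^ (n + 1 - i))
    (hUt : ∀ ξ t, deriv (fun s => U s ξ) t = -2 * V t ξ)
    (hVt : ∀ ξ t, deriv (fun s => V s ξ) t = -(ξ + w 1 t - u 1 t) * U t ξ + W t ξ)
    (hWt : ∀ ξ t, deriv (fun s => W s ξ) t = 2 * (ξ + w 1 t - u 1 t) * V t ξ)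
    (h : ℕ → ℝ → ℂ)
    (hh : ∀ t ξ, U t ξ * W t ξ + (V t ξ) ^ 2
        = ξ ^ (2 * n + 1) + ∑ k ∈ Finset.Icc 1 (2 * n + 1), h k t * ξ ^ (2 * n + 1 - k)) :
    (∀ (ξ : ℂ) (t : ℝ), deriv (fun s => U s ξ * W s ξ + (V s ξ) ^ 2) t = 0)
    ∧ (∀ k ∈ Finset.Icc 1 (2 * n + 1), ∀ t₁ t₂ : ℝ, h k t₁ = h k t₂) := by
  have hUd (ξ : ℂ) : Differentiable ℝ (U · ξ) := by
    simp_rw [hU]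
    exact (differentiable_const _).add (differentiable_sum_mul hu _)
  have hVd (ξ : ℂ) : Differentiable ℝ (V · ξ) := by
    simp_rw [hV]
    exact differentiable_sum_mul hv _
  have hWd (ξ : ℂ) : Differentiable ℝ (W · ξ) := by
    simp_rw [hW]
    exact (differentiable_const _).add (differentiable_sum_mul hw _)
  have hderiv (ξ : ℂ) (t : ℝ) : deriv (fun s => U s ξ * W s ξ + (V s ξ) ^ 2) t = 0 :=
    deriv_mul_add_sq_eq_zero (hUd ξ t) (hVd ξ t) (hWd ξ t) (hUt ξ t) (hVt ξ t) (hWt ξ t)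
  refine ⟨hderiv, fun k hk t₁ t₂ =>
    eq_of_forall_sum_mul_pow_sub_eq (a := (h · t₁)) (b := (h · t₂)) (fun ξ => ?_) hk⟩
  have hconst := is_const_of_deriv_eq_zero
    (((hUd ξ).fun_mul (hWd ξ)).fun_add ((hVd ξ).fun_pow 2)) (hderiv ξ) t₁ t₂
  rw [hh, hh] at hconst
  exact add_left_cancel hconst

/-- Along a solution of the Neumann–Moser system, the quantity `U·W + V²` has vanishing
time derivative for every `ξ`; consequently each coefficient `h_k` of the monic degree
`2n+1` polynomial `U(t,ξ)W(t,ξ) + V(t,ξ)²` is a constant function of `t`. -/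
theorem neumann_moser_integrals_constant (n : ℕ) (hn : 1 ≤ n) (u v w : ℕ → ℝ → ℂ)
    (hu : ∀ i ∈ Finset.Icc 1 n, Differentiable ℝ (u i))
    (hv : ∀ i ∈ Finset.Icc 1 n, Differentiable ℝ (v i))
    (hw : ∀ i ∈ Finset.Icc 1 (n + 1), Differentiable ℝ (w i))
    (U V W : ℝ → ℂ → ℂ)
    (hU : ∀ t ξ, U t ξ = ξ ^ n + ∑ i ∈ Finset.Icc 1 n, u i t * ξ ^ (n - i))
    (hV : ∀ t ξ, V t ξ = ∑ i ∈ Finset.Icc 1 n, v i t * ξ ^ (n - i))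
    (hW : ∀ t ξ, W t ξ = ξ ^ (n + 1) + ∑ i ∈ Finset.Icc 1 (n + 1), w i t * ξ ^ (n + 1 - i))
    (hUt : ∀ ξ t, deriv (fun s => U s ξ) t = -2 * V t ξ)
    (hVt : ∀ ξ t, deriv (fun s => V s ξ) t = -(ξ + w 1 t - u 1 t) * U t ξ + W t ξ)
    (hWt : ∀ ξ t, deriv (fun s => W s ξ) t = 2 * (ξ + w 1 t - u 1 t) * V t ξ)
    (h : ℕ → ℝ → ℂ)
    (hh : ∀ t ξ, U t ξ * W t ξ + (V t ξ) ^ 2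
        = ξ ^ (2 * n + 1) + ∑ k ∈ Finset.Icc 1 (2 * n + 1), h k t * ξ ^ (2 * n + 1 - k)) :
    (∀ (ξ : ℂ) (t : ℝ), deriv (fun s => U s ξ * W s ξ + (V s ξ) ^ 2) t = 0)
    ∧ (∀ k ∈ Finset.Icc 1 (2 * n + 1), ∀ t₁ t₂ : ℝ, h k t₁ = h k t₂) :=
  neumann_moser_integrals_constant_general n u v w hu hv hw U V W hU hV hW hUt hVt hWt h hh
end

section
/- Let n ≥ 1, let a₁,…,a_{n+1} ∈ ℂ be pairwise distinct, and let x_k, y_k : ℝ → ℂ (1 ≤ k ≤ n+1) be differentiable functions satisfying the complexified Neumann system: ẋ_k = y_k, ẏ_k = −(Γ + a_k)x_k with Γ(t) = ∑_{i=1}^{n+1}(y_i(t)² − a_i x_i(t)²), together with ∑_k x_k(t)² ≡ 1 and ∑_k x_k(t) y_k(t) ≡ 0. Then for each 1 ≤ j ≤ n+1 the Uhlenbeck–Devaney function F_j(t) = x_j(t)² + ∑_{k≠j} (x_k(t)y_j(t) − x_j(t)y_k(t))² / (a_j − a_k) has identically vanishing derivative, i.e. each F_j is an integral of the Neumann system.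 -/
/-!
Write `W_{kj} = x_k y_j - x_j y_k`. In `Ẇ_{kj}` the `Γ`-terms and the `y_j y_k`-terms cancel,
leaving `Ẇ_{kj} = (a_k - a_j) x_j x_k`, so the factor `a_k - a_j` cancels the denominator of the
`k`-th term of `F_j` and `Ḟ_j = 2 x_j y_j - 2 ∑_k W_{kj} x_j x_k`. Expanding, this sum is
`x_j y_j ∑ x_k² - x_j² ∑ x_k y_k = x_j y_j` by the two constraints.
-/

open Finset

section Algebra

variable {ι R : Type*} [Fintype ι] [DecidableEq ι] [CommRing R]

theorem sum_erase_cross_mul_eq_of_constraints (x y : ι → R) (j : ι)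
    (h₁ : ∑ k, x k ^ 2 = 1) (h₂ : ∑ k, x k * y k = 0) :
    ∑ k ∈ univ.erase j, (x k * y j - x j * y k) * (x j * x k) = x j * y j := by
  have hj : (x j * y j - x j * y j) * (x j * x j) = 0 := by ring
  calc ∑ k ∈ univ.erase j, (x k * y j - x j * y k) * (x j * x k)
      = ∑ k, (x k * y j - x j * y k) * (x j * x k) := sum_erase univ hj
    _ = x j * y j * ∑ k, x k ^ 2 - x j ^ 2 * ∑ k, x k * y k := by
        simp only [mul_sum, ← sum_sub_distrib]
        exact sum_congr rfl fun k _ => by ring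
    _ = x j * y j := by rw [h₁, h₂]; ring

end Algebra

section Calculus

variable {𝕜 𝕜' : Type*} [NontriviallyNormedField 𝕜] [NormedField 𝕜'] [NormedAlgebra 𝕜 𝕜']

theorem hasDerivAt_cross_sub {x₁ x₂ y₁ y₂ : 𝕜 → 𝕜'} {a₁ a₂ g : 𝕜'} {t : 𝕜}
    (hx₁ : HasDerivAt x₁ (y₁ t) t) (hx₂ : HasDerivAt x₂ (y₂ t) t)
    (hy₁ : HasDerivAt y₁ (-(g + a₁) * x₁ t) t) (hy₂ : HasDerivAt y₂ (-(g + a₂) * x₂ t) t) :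
    HasDerivAt (fun s => x₁ s * y₂ s - x₂ s * y₁ s) ((a₁ - a₂) * (x₁ t * x₂ t)) t :=
  ((hx₁.mul hy₂).sub (hx₂.mul hy₁)).congr_deriv (by ring)

variable {ι : Type*} [Fintype ι] [DecidableEq ι]

def uhlenbeckDevaney (a : ι → 𝕜') (x y : ι → 𝕜 → 𝕜') (j : ι) (s : 𝕜) : 𝕜' :=
  x j s ^ 2 + ∑ k ∈ univ.erase j, (x k s * y j s - x j s * y k s) ^ 2 / (a j - a k)

theorem hasDerivAt_uhlenbeckDevaney {a : ι → 𝕜'} (ha : Function.Injective a)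
    {x y : ι → 𝕜 → 𝕜'} {g : 𝕜'} {t : 𝕜}
    (hx : ∀ k, HasDerivAt (x k) (y k t) t) (hy : ∀ k, HasDerivAt (y k) (-(g + a k) * x k t) t)
    (j : ι) :
    HasDerivAt (uhlenbeckDevaney a x y j)
      (2 * x j t * y j t
        - 2 * ∑ k ∈ univ.erase j, (x k t * y j t - x j t * y k t) * (x j t * x k t)) t := by
  have hterm : ∀ k ∈ univ.erase j,
      HasDerivAt (fun s => (x k s * y j s - x j s * y k s) ^ 2 / (a j - a k))
        (-2 * ((x k t * y j t - x j t * y k t) * (x j t * x k t))) t := by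
    intro k hk
    have hne : a j - a k ≠ 0 := sub_ne_zero.mpr (ha.ne (ne_of_mem_erase hk).symm)
    refine (((hasDerivAt_cross_sub (hx k) (hx j) (hy k) (hy j)).pow 2).div_const _).congr_deriv ?_
    field_simp
    ring
  refine (((hx j).pow 2).add (HasDerivAt.fun_sum hterm)).congr_deriv ?_
  rw [← mul_sum]
  ring

end Calculus

theorem uhlenbeck_devaney_integrals_general (n : ℕ)
    (a : Fin (n + 1) → ℂ) (ha : Function.Injective a)
    (x y : Fin (n + 1) → ℝ → ℂ)
    (hxdiff : ∀ k, Differentiable ℝ (x k)) (hydiff : ∀ k, Differentiable ℝ (y k))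
    (Γ : ℝ → ℂ)
    (hx' : ∀ k t, deriv (x k) t = y k t)
    (hy' : ∀ k t, deriv (y k) t = -(Γ t + a k) * x k t)
    (hc1 : ∀ t, ∑ k, (x k t) ^ 2 = 1) (hc2 : ∀ t, ∑ k, x k t * y k t = 0) :
    ∀ (j : Fin (n + 1)) (t : ℝ),
      deriv (fun s => (x j s) ^ 2
        + ∑ k ∈ univ.erase j, (x k s * y j s - x j s * y k s) ^ 2 / (a j - a k)) t = 0 := by
  intro j t
  have hx : ∀ k, HasDerivAt (x k) (y k t) t := fun k => hx' k t ▸ (hxdiff k t).hasDerivAt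
  have hy : ∀ k, HasDerivAt (y k) (-(Γ t + a k) * x k t) t :=
    fun k => hy' k t ▸ (hydiff k t).hasDerivAt
  change deriv (uhlenbeckDevaney a x y j) t = 0
  rw [(hasDerivAt_uhlenbeckDevaney ha hx hy j).deriv,
    sum_erase_cross_mul_eq_of_constraints (x · t) (y · t) j (hc1 t) (hc2 t)]
  ring

/-- The Uhlenbeck–Devaney functions `F_j` are integrals of the complexified Neumann
system: along any solution, their time derivative vanishes identically. -/
theorem uhlenbeck_devaney_integrals (n : ℕ) (hn : 1 ≤ n)
    (a : Fin (n + 1) → ℂ) (ha : Function.Injective a)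
    (x y : Fin (n + 1) → ℝ → ℂ)
    (hxdiff : ∀ k, Differentiable ℝ (x k)) (hydiff : ∀ k, Differentiable ℝ (y k))
    (Γ : ℝ → ℂ) (hΓ : ∀ t, Γ t = ∑ i, ((y i t) ^ 2 - a i * (x i t) ^ 2))
    (hx' : ∀ k t, deriv (x k) t = y k t)
    (hy' : ∀ k t, deriv (y k) t = -(Γ t + a k) * x k t)
    (hc1 : ∀ t, ∑ k, (x k t) ^ 2 = 1) (hc2 : ∀ t, ∑ k, x k t * y k t = 0) :
    ∀ (j : Fin (n + 1)) (t : ℝ),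
      deriv (fun s => (x j s) ^ 2
        + ∑ k ∈ univ.erase j, (x k s * y j s - x j s * y k s) ^ 2 / (a j - a k)) t = 0 :=
  uhlenbeck_devaney_integrals_general n a ha x y hxdiff hydiff Γ hx' hy' hc1 hc2
end

section
/- Let n ≥ 1, let a₁,…,a_{n+1} ∈ ℂ be pairwise distinct, and let x, y ∈ ℂ^{n+1}. Define F_j = x_j² + ∑_{k≠j}(x_k y_j − x_j y_k)²/(a_j − a_k) for 1 ≤ j ≤ n+1. Then for every ξ ∈ ℂ: 𝐕(ξ)² + 𝐔(ξ)·𝐖(ξ) = f(ξ) · ∑_{j=1}^{n+1} F_j ∏_{k≠j}(ξ − a_k). Moreover ∑_{j=1}^{n+1} F_j = ∑_{j=1}^{n+1} x_j²; in particular ∑_j F_j = 1 whenever ∑_j x_j² = 1. -/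
open Finset

/-!
With `p_j = ∏_{k ≠ j} (ξ - a_k)` we have `𝐔𝐖 + 𝐕² = f 𝐔 + (∑ x_j² p_j)(∑ y_j² p_j) - (∑ x_j y_j p_j)²`,
and the last difference is a sum over ordered pairs `j ≠ k` whose symmetrisation is
`(x_j y_k - x_k y_j)² p_j p_k`. Since `p_j p_k (a_j - a_k) = f (p_j - p_k)`, the terms
`f (x_k y_j - x_j y_k)² p_j / (a_j - a_k)` have the same symmetrisation, which gives the identity.
The correction terms of `F_j` are antisymmetric in `(j, k)`, so they cancel in `∑ F_j`.
-/

section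
variable {ι : Type*} [Fintype ι] [DecidableEq ι]

theorem Finset.sum_sum_erase_eq_zero_of_add_swap {M : Type*} [AddCommMonoid M] (D : ι → ι → M)
    (h : ∀ j k, j ≠ k → D j k + D k j = 0) :
    ∑ j, ∑ k ∈ univ.erase j, D j k = 0 := by
  rw [sum_sigma']
  refine sum_involution (fun p _ => ⟨p.2, p.1⟩) (fun p hp => ?_) (fun p hp _ => ?_)
    (fun p hp => ?_) (fun _ _ => rfl)
  all_goals simp only [mem_sigma, mem_univ, mem_erase, true_and] at hp
  · exact h _ _ (Ne.symm hp.1)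
  · exact fun he => hp.1 (congrArg Sigma.fst he)
  · simpa using Ne.symm hp.1

theorem Finset.sum_sum_erase_eq_of_add_swap {M : Type*} [AddCommGroup M] {D E : ι → ι → M}
    (h : ∀ j k, j ≠ k → D j k + D k j = E j k + E k j) :
    ∑ j, ∑ k ∈ univ.erase j, D j k = ∑ j, ∑ k ∈ univ.erase j, E j k := by
  rw [← sub_eq_zero, ← sum_sub_distrib]
  simp_rw [← sum_sub_distrib]
  refine sum_sum_erase_eq_zero_of_add_swap _ fun j k hjk => ?_
  rw [sub_add_sub_comm, h j k hjk, sub_self]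

variable {R : Type*} [CommRing R]

theorem sum_mul_sum_sub_sq_eq_sum_sum_erase (w u v : ι → R) :
    (∑ j, u j ^ 2 * w j) * (∑ j, v j ^ 2 * w j) - (∑ j, u j * v j * w j) ^ 2
      = ∑ j, ∑ k ∈ univ.erase j, w j * w k * u j * v k * (u j * v k - u k * v j) := by
  rw [sq, sum_mul_sum, sum_mul_sum, ← sum_sub_distrib]
  refine sum_congr rfl fun j _ => ?_
  rw [← sum_sub_distrib, ← add_sum_erase univ _ (mem_univ j),
    show u j ^ 2 * w j * (v j ^ 2 * w j) - u j * v j * w j * (u j * v j * w j) = 0 by ring,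
    zero_add]
  exact sum_congr rfl fun k _ => by ring

theorem prod_erase_mul_prod_erase_mul_sub (a : ι → R) (ξ : R) (j k : ι) :
    (∏ i ∈ univ.erase j, (ξ - a i)) * (∏ i ∈ univ.erase k, (ξ - a i)) * (a j - a k)
      = (∏ i, (ξ - a i)) * ((∏ i ∈ univ.erase j, (ξ - a i)) - ∏ i ∈ univ.erase k, (ξ - a i)) := by
  have hj := mul_prod_erase univ (fun i => ξ - a i) (mem_univ j)
  have hk := mul_prod_erase univ (fun i => ξ - a i) (mem_univ k)
  linear_combination (∏ i ∈ univ.erase j, (ξ - a i)) * hk - (∏ i ∈ univ.erase k, (ξ - a i)) * hj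

end

section
variable {ι K : Type*} [Fintype ι] [DecidableEq ι] [Field K]

theorem sum_sum_erase_sq_div_sub_eq_zero (a x y : ι → K) :
    ∑ j, ∑ k ∈ univ.erase j, (x k * y j - x j * y k) ^ 2 / (a j - a k) = 0 :=
  sum_sum_erase_eq_zero_of_add_swap _ fun j k _ => by
    rw [← neg_sub (a j), div_neg]
    ring

theorem moser_identity {a : ι → K} (ha : Function.Injective a) (x y : ι → K) (ξ : K) :
    (∑ j, x j ^ 2 * ∏ k ∈ univ.erase j, (ξ - a k))
        * ((∏ j, (ξ - a j)) + ∑ j, y j ^ 2 * ∏ k ∈ univ.erase j, (ξ - a k))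
      - (∑ j, x j * y j * ∏ k ∈ univ.erase j, (ξ - a k)) ^ 2
      = (∏ j, (ξ - a j)) * ∑ j, (x j ^ 2
          + ∑ k ∈ univ.erase j, (x k * y j - x j * y k) ^ 2 / (a j - a k))
          * ∏ k ∈ univ.erase j, (ξ - a k) := by
  set f := ∏ j, (ξ - a j)
  set p : ι → K := fun j => ∏ k ∈ univ.erase j, (ξ - a k)
  have lagrange := sum_mul_sum_sub_sq_eq_sum_sum_erase p x y
  have key : ∑ j, ∑ k ∈ univ.erase j, p j * p k * x j * y k * (x j * y k - x k * y j)
      = ∑ j, ∑ k ∈ univ.erase j, f * ((x k * y j - x j * y k) ^ 2 / (a j - a k)) * p j := by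
    refine sum_sum_erase_eq_of_add_swap fun j k hjk => ?_
    have hprod : p j * p k * (a j - a k) = f * (p j - p k) :=
      prod_erase_mul_prod_erase_mul_sub a ξ j k
    have hdiv := div_mul_cancel₀ ((x k * y j - x j * y k) ^ 2) (sub_ne_zero.mpr (ha.ne hjk))
    rw [← neg_sub (a j), div_neg]
    linear_combination (-p j * p k) * hdiv
      + (x k * y j - x j * y k) ^ 2 / (a j - a k) * hprod
  have expand : f * ∑ j, (x j ^ 2
        + ∑ k ∈ univ.erase j, (x k * y j - x j * y k) ^ 2 / (a j - a k)) * p j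
      = f * ∑ j, x j ^ 2 * p j
        + ∑ j, ∑ k ∈ univ.erase j, f * ((x k * y j - x j * y k) ^ 2 / (a j - a k)) * p j := by
    simp only [add_mul, sum_add_distrib, mul_add, sum_mul, mul_sum, mul_assoc]
  linear_combination lagrange + key - expand

end

theorem moser_polynomials_and_uhlenbeck_devaney_general (n : ℕ)
    (a x y : Fin (n + 1) → ℂ) (ha : Function.Injective a)
    (F : Fin (n + 1) → ℂ)
    (hF : ∀ j, F j = (x j) ^ 2
        + ∑ k ∈ univ.erase j, (x k * y j - x j * y k) ^ 2 / (a j - a k)) :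
    (∀ ξ : ℂ,
      (Complex.I * ∑ j, x j * y j * ∏ k ∈ univ.erase j, (ξ - a k)) ^ 2
        + (∑ j, (x j) ^ 2 * ∏ k ∈ univ.erase j, (ξ - a k))
          * ((∏ j, (ξ - a j)) + ∑ j, (y j) ^ 2 * ∏ k ∈ univ.erase j, (ξ - a k))
      = (∏ j, (ξ - a j)) * ∑ j, F j * ∏ k ∈ univ.erase j, (ξ - a k))
    ∧ (∑ j, F j = ∑ j, (x j) ^ 2)
    ∧ ((∑ j, (x j) ^ 2 = 1) → ∑ j, F j = 1) := by
  have sum_F : ∑ j, F j = ∑ j, x j ^ 2 := by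
    simp only [hF, sum_add_distrib, sum_sum_erase_sq_div_sub_eq_zero, add_zero]
  refine ⟨fun ξ => ?_, sum_F, sum_F.trans⟩
  simp only [hF, mul_pow, Complex.I_sq]
  rw [← moser_identity ha]
  ring

/-- The identity `𝐕² + 𝐔·𝐖 = f · ∑_j F_j ∏_{k≠j}(ξ − a_k)` for the Moser polynomials,
where `F_j` are the Uhlenbeck–Devaney functions; moreover `∑ F_j = ∑ x_j²`, so
`∑ F_j = 1` whenever `∑ x_j² = 1`. -/
theorem moser_polynomials_and_uhlenbeck_devaney (n : ℕ) (hn : 1 ≤ n)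
    (a x y : Fin (n + 1) → ℂ) (ha : Function.Injective a)
    (F : Fin (n + 1) → ℂ)
    (hF : ∀ j, F j = (x j) ^ 2
        + ∑ k ∈ univ.erase j, (x k * y j - x j * y k) ^ 2 / (a j - a k)) :
    (∀ ξ : ℂ,
      (Complex.I * ∑ j, x j * y j * ∏ k ∈ univ.erase j, (ξ - a k)) ^ 2
        + (∑ j, (x j) ^ 2 * ∏ k ∈ univ.erase j, (ξ - a k))
          * ((∏ j, (ξ - a j)) + ∑ j, (y j) ^ 2 * ∏ k ∈ univ.erase j, (ξ - a k))
      = (∏ j, (ξ - a j)) * ∑ j, F j * ∏ k ∈ univ.erase j, (ξ - a k))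
    ∧ (∑ j, F j = ∑ j, (x j) ^ 2)
    ∧ ((∑ j, (x j) ^ 2 = 1) → ∑ j, F j = 1) :=
  moser_polynomials_and_uhlenbeck_devaney_general n a x y ha F hF
end

section
/- Let n ≥ 1, let a₁,…,a_{n+1} ∈ ℂ be pairwise distinct, and let x, y ∈ ℂ^{n+1} satisfy ∑_j x_j² = 1 and ∑_j x_j y_j = 0. Let F_j = x_j² + ∑_{k≠j}(x_k y_j − x_j y_k)²/(a_j − a_k) be the Uhlenbeck–Devaney integrals, and let h₁,…,h_{2n+1} be defined by 𝐔(ξ)𝐖(ξ) + 𝐕(ξ)² = ξ^{2n+1} + ∑_{k=1}^{2n+1} h_k ξ^{2n+1−k}. Let M^{(1,1)} be the (n+1)×(n+1) matrix with entries M^{(1,1)}_{k,j} = e_{k−1}(−a^{(j)}), let D^{I} be the lower-triangular Toeplitz matrix with D^{I}_{i,j} = e_{i−j}(−a) (j ≤ i), and D^{II} the upper-triangular Toeplitz matrix with D^{II}_{i,j} = e_{n+1+i−j}(−a) (j ≥ i). Then (1, h₁, …, h_n)ᵀ = D^{I} M^{(1,1)} (F₁,…,F_{n+1})ᵀ and (h_{n+1},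 …, h_{2n+1})ᵀ = D^{II} M^{(1,1)} (F₁,…,F_{n+1})ᵀ; moreover D^{I} M^{(1,1)} is invertible, so (F₁,…,F_{n+1})ᵀ = (D^{I} M^{(1,1)})⁻¹ (1, h₁, …, h_n)ᵀ, and if additionally all a_j ≠ 0 then (F₁,…,F_{n+1})ᵀ = (D^{II} M^{(1,1)})⁻¹ (h_{n+1}, …, h_{2n+1})ᵀ. -/
/-!
With `p_j = ∏_{k ≠ j} (ξ - a_k)` and `f = (ξ - a_j) p_j`, Lagrange's identity writes
`𝐔𝐖 + 𝐕² - f 𝐔` as a sum of `(x_j y_k - x_k y_j)² p_j p_k` over pairs, and the partial fraction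
`p_j p_k = f (p_j - p_k) / (a_j - a_k)` turns it into `f ∑_j (F_j - x_j²) p_j`. Hence
`𝐔𝐖 + 𝐕² = f · Q` with `Q = ∑_j F_j p_j`. Reversing the order of coefficients, `f` has
coefficients `e_k(-a)`, `Q` has coefficients `M^{(1,1)} F`, and their product has coefficients
`1, h₁, …, h_{2n+1}`; rows `0, …, n` and `n + 1, …, 2n + 1` of this Toeplitz product are `D^I` and
`D^II`. Finally `D^I` is unitriangular, `D^II` is triangular with diagonal `∏ (-a_j)`, and
`M^{(1,1)} v = 0` forces `∑_j v_j p_j = 0`, whose value at `a_i` is `v_i ∏_{k ≠ i} (a_i - a_k)`.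
-/

open Finset Polynomial Lagrange
open scoped Matrix

theorem sum_sum_eq_zero_of_antisymm {ι M : Type*} [AddCommMonoid M] (s : Finset ι)
    (B : ι → ι → M) (hB : ∀ j k, j ≠ k → B j k + B k j = 0) (hdiag : ∀ j, B j j = 0) :
    ∑ j ∈ s, ∑ k ∈ s, B j k = 0 := by
  rw [← sum_product']
  refine sum_involution (fun p _ => p.swap) (fun p _ => ?_) (fun p _ hp => ?_)
    (fun p hp => mem_product.mpr (mem_product.mp hp).symm) (fun p _ => p.swap_swap)
  · by_cases hp : p.1 = p.2
    · simp [hp, hdiag]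
    · exact hB p.1 p.2 hp
  · intro hswap
    obtain ⟨j, k⟩ := p
    obtain rfl : k = j := congrArg Prod.fst hswap
    exact hp (hdiag k)

section MoserIdentity

variable {K ι : Type*} [Field K] [Fintype ι] [DecidableEq ι]

def uhlenbeckIntegral (a x y : ι → K) (j : ι) : K :=
  x j ^ 2 + ∑ k ∈ univ.erase j, (x k * y j - x j * y k) ^ 2 / (a j - a k)

theorem sum_mul_sum_sub_sq_eq_prod_mul_sum_uhlenbeckIntegral {a : ι → K}
    (ha : Function.Injective a) (x y : ι → K) (ξ : K) :
    (∑ j, x j ^ 2 * ∏ k ∈ univ.erase j, (ξ - a k))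
        * ((∏ j, (ξ - a j)) + ∑ j, y j ^ 2 * ∏ k ∈ univ.erase j, (ξ - a k))
      - (∑ j, x j * y j * ∏ k ∈ univ.erase j, (ξ - a k)) ^ 2
    = (∏ j, (ξ - a j)) * ∑ j, uhlenbeckIntegral a x y j * ∏ k ∈ univ.erase j, (ξ - a k) := by
  set p : ι → K := fun j => ∏ k ∈ univ.erase j, (ξ - a k)
  set f := ∏ j, (ξ - a j)
  have hfp : ∀ j, f = (ξ - a j) * p j := fun j => (mul_prod_erase univ _ (mem_univ j)).symm
  have hpair : ∀ j k, f * p j - f * p k = (a j - a k) * (p j * p k) := fun j k => by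
    linear_combination p j * hfp k - p k * hfp j
  -- `p_j p_k = f (p_j - p_k) / (a_j - a_k)` makes `B` antisymmetric.
  set B : ι → ι → K := fun j k => (x j ^ 2 * y k ^ 2 - x j * y j * (x k * y k)) * (p j * p k)
    - (x k * y j - x j * y k) ^ 2 / (a j - a k) * (f * p j)
  have hB : ∑ j, ∑ k, B j k = 0 := by
    refine sum_sum_eq_zero_of_antisymm _ B (fun j k hjk => ?_) (fun j => by simp only [B]; ring)
    have hne : a j - a k ≠ 0 := sub_ne_zero.mpr (ha.ne hjk)
    simp only [B]
    rw [show a k - a j = -(a j - a k) by ring, div_neg]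
    linear_combination (-(x k * y j - x j * y k) ^ 2 / (a j - a k)) * hpair j k
      - (x k * y j - x j * y k) ^ 2 * (p j * p k) * div_self hne
  have hL : ∑ j, ∑ k, (x j ^ 2 * y k ^ 2 - x j * y j * (x k * y k)) * (p j * p k)
      = (∑ j, x j ^ 2 * p j) * (∑ j, y j ^ 2 * p j) - (∑ j, x j * y j * p j) ^ 2 := by
    rw [sum_mul_sum, sq, sum_mul_sum, ← sum_sub_distrib]
    refine sum_congr rfl fun j _ => ?_
    rw [← sum_sub_distrib]
    exact sum_congr rfl fun k _ => by ring
  have hR : ∑ j, ∑ k, (x k * y j - x j * y k) ^ 2 / (a j - a k) * (f * p j)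
      = f * ∑ j, (∑ k ∈ univ.erase j, (x k * y j - x j * y k) ^ 2 / (a j - a k)) * p j := by
    rw [mul_sum]
    refine sum_congr rfl fun j _ => ?_
    rw [← sum_erase univ (a := j) (by simp), sum_mul, mul_sum]
    exact sum_congr rfl fun k _ => by ring
  simp only [B, sum_sub_distrib, hL, hR] at hB
  simp only [uhlenbeckIntegral, add_mul, sum_add_distrib]
  linear_combination hB

end MoserIdentity

section Polynomials

variable {R : Type*} [CommRing R]

theorem coeff_mul_eq_sum_fin (g P : R[X]) {n : ℕ} (hP : P.natDegree ≤ n) (m : ℕ) :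
    (g * P).coeff m
      = ∑ j : Fin (n + 1), (if (j : ℕ) ≤ m then g.coeff (m - j) else 0) * P.coeff j := by
  conv_lhs => rw [P.as_sum_range_C_mul_X_pow' (Nat.lt_succ_of_le hP)]
  rw [mul_sum, finsetSum_coeff, ← Fin.sum_univ_eq_sum_range]
  refine sum_congr rfl fun j _ => ?_
  rw [mul_left_comm, coeff_C_mul, coeff_mul_X_pow', mul_comm]

theorem mulVec_coeff_reflect_eq_coeff_mul {m : Type*} [Fintype m] {g P : R[X]} {d n : ℕ}
    (hg : g.natDegree ≤ d) (hP : P.natDegree ≤ n) (D : Matrix m (Fin (n + 1)) R) (r : m → ℕ)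
    (hr : ∀ k, r k ≤ d + n)
    (hD : ∀ k j, D k j = if (j : ℕ) ≤ r k then (reflect d g).coeff (r k - j) else 0) (k : m) :
    (D *ᵥ fun j => (reflect n P).coeff j) k = (g * P).coeff (d + n - r k) := by
  rw [← revAt_le (hr k), ← coeff_reflect, reflect_mul g P hg hP,
    coeff_mul_eq_sum_fin _ _ (natDegree_reflect_le.trans (max_le le_rfl hP))]
  simp only [Matrix.mulVec, dotProduct, hD]

theorem coeff_X_pow_add_sum_C_mul_X_pow_sub (N : ℕ) (h : ℕ → R) {m : ℕ} (hm : m ≤ N) :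
    (X ^ N + ∑ k ∈ Icc 1 N, C (h k) * X ^ (N - k)).coeff (N - m) = if m = 0 then 1 else h m := by
  rw [coeff_add, coeff_X_pow, finsetSum_coeff]
  simp_rw [coeff_C_mul_X_pow]
  rw [sum_congr rfl fun k hk => if_congr (show N - m = N - k ↔ k = m by grind) rfl rfl,
    sum_ite_eq']
  by_cases hm0 : m = 0
  · simp [hm0]
  · rw [if_neg (by omega), if_pos (mem_Icc.mpr (by omega)), if_neg hm0, zero_add]

theorem Multiset.esymm_eq_zero_of_card_lt (s : Multiset R) {k : ℕ} (hk : Multiset.card s < k) :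
    s.esymm k = 0 := by
  simp [Multiset.esymm, Multiset.powersetCard_eq_empty _ hk]

variable {ι : Type*}

theorem coeff_reflect_nodal [Nontrivial R] (s : Finset ι) (v : ι → R) (k : ℕ) :
    (reflect #s (nodal s v)).coeff k = (s.val.map fun i => -v i).esymm k := by
  rw [coeff_reflect]
  rcases le_or_gt k #s with hk | hk
  · have hprod : nodal s v = (s.val.map fun i => X + C (-v i)).prod := by
      simp only [nodal, map_neg, ← sub_eq_add_neg]; rfl
    rw [revAt_le hk, hprod, Multiset.prod_X_add_C_coeff' _ _ (by simp)]
    simp [Nat.sub_sub_self hk]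
  · rw [revAt_eq_self_of_lt hk, coeff_eq_zero_of_natDegree_lt (by rwa [natDegree_nodal]),
      Multiset.esymm_eq_zero_of_card_lt _ (by simpa using hk)]

variable [Fintype ι] [DecidableEq ι]

noncomputable def nodalCombination (a v : ι → R) : R[X] :=
  ∑ j, C (v j) * nodal (univ.erase j) a

theorem natDegree_nodalCombination_le [Nontrivial R] (a v : ι → R) :
    (nodalCombination a v).natDegree ≤ Fintype.card ι - 1 :=
  natDegree_sum_le_of_forall_le _ _ fun j _ => (natDegree_C_mul_le _ _).trans
    (by rw [natDegree_nodal, card_erase_of_mem (mem_univ j), card_univ])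

theorem eval_nodalCombination_node (a v : ι → R) (i : ι) :
    (nodalCombination a v).eval (a i) = v i * (nodal (univ.erase i) a).eval (a i) := by
  rw [nodalCombination, eval_finsetSum, sum_eq_single i]
  · rw [eval_mul, eval_C]
  · intro j _ hji
    rw [eval_mul, eval_nodal_at_node (mem_erase.mpr ⟨hji.symm, mem_univ i⟩), mul_zero]
  · simp

end Polynomials

section Matrices

variable {R : Type*} [CommRing R] {n : ℕ}

theorem mulVec_eq_coeff_reflect_nodalCombination [Nontrivial R] (a : Fin (n + 1) → R)
    (M : Matrix (Fin (n + 1)) (Fin (n + 1)) R)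
    (hM : ∀ k j, M k j = ((univ.erase j).val.map fun l => -a l).esymm k) (v : Fin (n + 1) → R) :
    M *ᵥ v = fun k : Fin (n + 1) => (reflect n (nodalCombination a v)).coeff k := by
  funext k
  have hcard : ∀ j : Fin (n + 1), #(univ.erase j) = n := fun j => by simp
  simp only [Matrix.mulVec, dotProduct, hM, coeff_reflect, nodalCombination, finsetSum_coeff,
    coeff_C_mul]
  refine sum_congr rfl fun j _ => ?_
  rw [mul_comm, ← coeff_reflect, ← coeff_reflect_nodal, hcard]

theorem det_ne_zero_of_esymm_erase [IsDomain R] {a : Fin (n + 1) → R}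
    (ha : Function.Injective a) (M : Matrix (Fin (n + 1)) (Fin (n + 1)) R)
    (hM : ∀ k j, M k j = ((univ.erase j).val.map fun l => -a l).esymm k) : M.det ≠ 0 := by
  rw [Ne, ← Matrix.exists_mulVec_eq_zero_iff]
  rintro ⟨v, hv, hMv⟩
  rw [mulVec_eq_coeff_reflect_nodalCombination a M hM] at hMv
  have hdeg : (nodalCombination a v).natDegree ≤ n := by
    simpa using natDegree_nodalCombination_le a v
  have hzero : nodalCombination a v = 0 := by
    rw [← reflect_eq_zero_iff (N := n)]
    ext k
    rcases lt_or_ge k (n + 1) with hk | hk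
    · exact congrFun hMv ⟨k, hk⟩
    · exact coeff_eq_zero_of_natDegree_lt
        ((natDegree_reflect_le.trans (max_le le_rfl hdeg)).trans_lt hk)
  refine hv (funext fun i => ?_)
  have hi := congrArg (eval (a i)) hzero
  rw [eval_nodalCombination_node, eval_zero] at hi
  refine (mul_eq_zero.mp hi).resolve_right (eval_nodal_not_at_node fun l hl => ?_)
  exact ha.ne (mem_erase.mp hl).1.symm

theorem det_eq_one_of_esymm_lowerToeplitz (a : Fin (n + 1) → R)
    (D : Matrix (Fin (n + 1)) (Fin (n + 1)) R)
    (hD : ∀ i j : Fin (n + 1), D i j =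
      if (j : ℕ) ≤ i then (univ.val.map fun l => -a l).esymm (i - j) else 0) :
    D.det = 1 := by
  rw [Matrix.det_of_isLowerTriangular D fun i j (hij : (i : ℕ) < j) => by
    rw [hD, if_neg (not_le.mpr hij)]]
  refine prod_eq_one fun i _ => ?_
  simp [hD, Multiset.esymm]

theorem det_ne_zero_of_esymm_upperToeplitz [IsDomain R] {a : Fin (n + 1) → R}
    (ha : ∀ j, a j ≠ 0) (D : Matrix (Fin (n + 1)) (Fin (n + 1)) R)
    (hD : ∀ i j : Fin (n + 1), D i j =
      if (i : ℕ) ≤ j then (univ.val.map fun l => -a l).esymm (n + 1 + i - j) else 0) :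
    D.det ≠ 0 := by
  rw [Matrix.det_of_isUpperTriangular (M := D) fun i j (hij : (j : ℕ) < i) => by
    rw [hD, if_neg (not_le.mpr hij)]]
  refine prod_ne_zero_iff.mpr fun i _ => ?_
  have htop := coeff_reflect_nodal univ a (n + 1)
  simp only [card_univ, Fintype.card_fin, coeff_reflect, revAt_le le_rfl, Nat.sub_self,
    coeff_zero_eq_eval_zero, eval_nodal] at htop
  rw [hD, if_pos le_rfl, Nat.add_sub_cancel, ← htop]
  exact prod_ne_zero_iff.mpr fun j _ => by simpa using ha j

theorem esymm_upperToeplitz_eq (a : Fin (n + 1) → R) (D : Matrix (Fin (n + 1)) (Fin (n + 1)) R)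
    (hD : ∀ i j : Fin (n + 1), D i j =
      if (i : ℕ) ≤ j then (univ.val.map fun l => -a l).esymm (n + 1 + i - j) else 0)
    (i j : Fin (n + 1)) :
    D i j = if (j : ℕ) ≤ n + 1 + i then (univ.val.map fun l => -a l).esymm (n + 1 + i - j)
      else 0 := by
  rw [hD, if_pos (show (j : ℕ) ≤ n + 1 + i by omega)]
  split_ifs with hij
  · rfl
  · exact (Multiset.esymm_eq_zero_of_card_lt _ (by simp; omega)).symm

theorem mul_mulVec_eq_coeff_of_nodal_mul_nodalCombination [Nontrivial R]
    {a v : Fin (n + 1) → R} {h : ℕ → R}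
    (hfQ : nodal univ a * nodalCombination a v
      = X ^ (2 * n + 1) + ∑ k ∈ Icc 1 (2 * n + 1), C (h k) * X ^ (2 * n + 1 - k))
    (M : Matrix (Fin (n + 1)) (Fin (n + 1)) R)
    (hM : ∀ k j, M k j = ((univ.erase j).val.map fun l => -a l).esymm k)
    (D : Matrix (Fin (n + 1)) (Fin (n + 1)) R) (r : Fin (n + 1) → ℕ) (hr : ∀ k, r k ≤ 2 * n + 1)
    (hD : ∀ k j, D k j = if (j : ℕ) ≤ r k then (univ.val.map fun l => -a l).esymm (r k - j)
      else 0) (k : Fin (n + 1)) :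
    ((D * M) *ᵥ v) k = if r k = 0 then 1 else h (r k) := by
  have hf := coeff_reflect_nodal univ a
  rw [card_univ, Fintype.card_fin] at hf
  have hfdeg : (nodal univ a).natDegree ≤ n + 1 := by simp [natDegree_nodal]
  have hdeg : (nodalCombination a v).natDegree ≤ n := by
    simpa using natDegree_nodalCombination_le a v
  rw [← Matrix.mulVec_mulVec, mulVec_eq_coeff_reflect_nodalCombination a M hM,
    mulVec_coeff_reflect_eq_coeff_mul hfdeg hdeg D r (by grind) (by simpa only [hf] using hD),
    show n + 1 + n = 2 * n + 1 by ring, hfQ, coeff_X_pow_add_sum_C_mul_X_pow_sub _ _ (hr k)]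

theorem Matrix.eq_nonsing_inv_mulVec_of_mulVec_eq {m : Type*} [Fintype m] [DecidableEq m]
    {A : Matrix m m R} (hA : IsUnit A.det) {v w : m → R} (h : A *ᵥ v = w) : v = A⁻¹ *ᵥ w := by
  rw [← h, mulVec_mulVec, nonsing_inv_mul A hA, one_mulVec]

end Matrices

theorem F_to_h_transformation_general (n : ℕ)
    (a x y : Fin (n + 1) → ℂ) (ha : Function.Injective a)
    (F : Fin (n + 1) → ℂ)
    (hF : ∀ j, F j = (x j) ^ 2
        + ∑ k ∈ univ.erase j, (x k * y j - x j * y k) ^ 2 / (a j - a k))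
    (h : ℕ → ℂ)
    (hdef : ∀ ξ : ℂ,
      (∑ j, (x j) ^ 2 * ∏ k ∈ univ.erase j, (ξ - a k))
          * ((∏ j, (ξ - a j)) + ∑ j, (y j) ^ 2 * ∏ k ∈ univ.erase j, (ξ - a k))
        + (Complex.I * ∑ j, x j * y j * ∏ k ∈ univ.erase j, (ξ - a k)) ^ 2
      = ξ ^ (2 * n + 1) + ∑ k ∈ Finset.Icc 1 (2 * n + 1), h k * ξ ^ (2 * n + 1 - k))
    (M11 DI DII : Matrix (Fin (n + 1)) (Fin (n + 1)) ℂ)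
    (hM11 : ∀ k j : Fin (n + 1),
      M11 k j = ((univ.erase j).val.map (fun l => -a l)).esymm (k : ℕ))
    (hDI : ∀ i j : Fin (n + 1), DI i j =
      if (j : ℕ) ≤ (i : ℕ) then (univ.val.map (fun l => -a l)).esymm ((i : ℕ) - (j : ℕ)) else 0)
    (hDII : ∀ i j : Fin (n + 1), DII i j =
      if (i : ℕ) ≤ (j : ℕ) then (univ.val.map (fun l => -a l)).esymm (n + 1 + (i : ℕ) - (j : ℕ))
      else 0) :
    (∀ k : Fin (n + 1),
      (DI * M11).mulVec F k = if (k : ℕ) = 0 then 1 else h (k : ℕ))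
    ∧ (∀ k : Fin (n + 1), (DII * M11).mulVec F k = h (n + 1 + (k : ℕ)))
    ∧ IsUnit (DI * M11)
    ∧ (∀ j, F j = (DI * M11)⁻¹.mulVec
        (fun k : Fin (n + 1) => if (k : ℕ) = 0 then 1 else h (k : ℕ)) j)
    ∧ ((∀ j, a j ≠ 0) →
        ∀ j, F j = (DII * M11)⁻¹.mulVec (fun k : Fin (n + 1) => h (n + 1 + (k : ℕ))) j) := by
  have hfQ : nodal univ a * nodalCombination a F
      = X ^ (2 * n + 1) + ∑ k ∈ Icc 1 (2 * n + 1), C (h k) * X ^ (2 * n + 1 - k) := by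
    refine Polynomial.funext fun ξ => ?_
    simp only [nodalCombination, eval_mul, eval_add, eval_pow, eval_X, eval_C, eval_nodal,
      eval_finsetSum, hF]
    rw [← hdef ξ, mul_pow, Complex.I_sq]
    exact (sum_mul_sum_sub_sq_eq_prod_mul_sum_uhlenbeckIntegral ha x y ξ).symm.trans (by ring)
  have hI := mul_mulVec_eq_coeff_of_nodal_mul_nodalCombination hfQ M11 hM11 DI (↑) (by omega) hDI
  have hII : ∀ k, ((DII * M11) *ᵥ F) k = h (n + 1 + k) := fun k =>
    (mul_mulVec_eq_coeff_of_nodal_mul_nodalCombination hfQ M11 hM11 DII (fun i => n + 1 + i)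
      (by omega) (esymm_upperToeplitz_eq a DII hDII) k).trans (if_neg (by omega))
  have hM11det := det_ne_zero_of_esymm_erase ha M11 hM11
  have hIdet : IsUnit (DI * M11).det := by
    rw [Matrix.det_mul, det_eq_one_of_esymm_lowerToeplitz a DI hDI, one_mul]
    exact hM11det.isUnit
  refine ⟨hI, hII, (Matrix.isUnit_iff_isUnit_det _).mpr hIdet,
    congrFun (Matrix.eq_nonsing_inv_mulVec_of_mulVec_eq hIdet (funext hI)), fun ha0 => ?_⟩
  have hIIdet : IsUnit (DII * M11).det := by
    rw [Matrix.det_mul]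
    exact (mul_ne_zero (det_ne_zero_of_esymm_upperToeplitz ha0 DII hDII) hM11det).isUnit
  exact congrFun (Matrix.eq_nonsing_inv_mulVec_of_mulVec_eq hIIdet (funext hII))

/-- The invertible transformation between the Uhlenbeck–Devaney integrals
`F₁, …, F_{n+1}` of the Neumann system and the integrals `h₁, …, h_{2n+1}` of the
Neumann–Moser system, realized by the matrices `D^I·M^{(1,1)}` and `D^II·M^{(1,1)}`. -/
theorem F_to_h_transformation (n : ℕ) (hn : 1 ≤ n)
    (a x y : Fin (n + 1) → ℂ) (ha : Function.Injective a)
    (hx : ∑ j, (x j) ^ 2 = 1) (hxy : ∑ j, x j * y j = 0)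
    (F : Fin (n + 1) → ℂ)
    (hF : ∀ j, F j = (x j) ^ 2
        + ∑ k ∈ univ.erase j, (x k * y j - x j * y k) ^ 2 / (a j - a k))
    (h : ℕ → ℂ)
    (hdef : ∀ ξ : ℂ,
      (∑ j, (x j) ^ 2 * ∏ k ∈ univ.erase j, (ξ - a k))
          * ((∏ j, (ξ - a j)) + ∑ j, (y j) ^ 2 * ∏ k ∈ univ.erase j, (ξ - a k))
        + (Complex.I * ∑ j, x j * y j * ∏ k ∈ univ.erase j, (ξ - a k)) ^ 2
      = ξ ^ (2 * n + 1) + ∑ k ∈ Finset.Icc 1 (2 * n + 1), h k * ξ ^ (2 * n + 1 - k))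
    (M11 DI DII : Matrix (Fin (n + 1)) (Fin (n + 1)) ℂ)
    (hM11 : ∀ k j : Fin (n + 1),
      M11 k j = ((univ.erase j).val.map (fun l => -a l)).esymm (k : ℕ))
    (hDI : ∀ i j : Fin (n + 1), DI i j =
      if (j : ℕ) ≤ (i : ℕ) then (univ.val.map (fun l => -a l)).esymm ((i : ℕ) - (j : ℕ)) else 0)
    (hDII : ∀ i j : Fin (n + 1), DII i j =
      if (i : ℕ) ≤ (j : ℕ) then (univ.val.map (fun l => -a l)).esymm (n + 1 + (i : ℕ) - (j : ℕ))
      else 0) :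
    (∀ k : Fin (n + 1),
      (DI * M11).mulVec F k = if (k : ℕ) = 0 then 1 else h (k : ℕ))
    ∧ (∀ k : Fin (n + 1), (DII * M11).mulVec F k = h (n + 1 + (k : ℕ)))
    ∧ IsUnit (DI * M11)
    ∧ (∀ j, F j = (DI * M11)⁻¹.mulVec
        (fun k : Fin (n + 1) => if (k : ℕ) = 0 then 1 else h (k : ℕ)) j)
    ∧ ((∀ j, a j ≠ 0) →
        ∀ j, F j = (DII * M11)⁻¹.mulVec (fun k : Fin (n + 1) => h (n + 1 + (k : ℕ))) j) :=
  F_to_h_transformation_general n a x y ha F hF h hdef M11 DI DII hM11 hDI hDII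
end

section
/- Let (u,v,w) be a solution of the Neumann–Moser system of dimension n whose coordinate functions are twice differentiable, and set Γ(t) = w₁(t) − u₁(t). Then for all t: v_i = −(1/2)·u̇_i for all 1 ≤ i ≤ n; w₁ = Γ + u₁; w_i = −(1/2)·ü_{i−1} + Γ·u_{i−1} + u_i for all 2 ≤ i ≤ n; and w_{n+1} = −(1/2)·ü_n + Γ·u_n. In particular all v_i and w_i are differential polynomials in Γ, u₁, …, u_n. -/
/-!
Both sides of the first two equations of the system are polynomials in `ξ` whose coefficients
depend on `t`, so over the infinite field `ℂ` they agree coefficientwise. The coefficient of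
`ξ^(n-i)` in `∂ₜU = -2V` gives `vᵢ = -u̇ᵢ/2`; the coefficient of `ξ^(n-j)` in
`∂ₜV = -(ξ + Γ)U + W` gives `w_{j+1} = v̇ⱼ + Γuⱼ + u_{j+1}` (the last term absent for `j = n`),
and differentiating the first identity gives `v̇ⱼ = -üⱼ/2`.
-/

open Finset Polynomial

section DescPoly

variable {R : Type*} [CommSemiring R]

noncomputable def descPoly (m : ℕ) (a : ℕ → R) : R[X] :=
  ∑ i ∈ Icc 1 m, C (a i) * X ^ (m - i)

@[simp]
lemma eval_descPoly (m : ℕ) (a : ℕ → R) (x : R) :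
    (descPoly m a).eval x = ∑ i ∈ Icc 1 m, a i * x ^ (m - i) := by
  simp [descPoly, eval_finsetSum]

lemma coeff_descPoly (m : ℕ) (a : ℕ → R) (k : ℕ) :
    (descPoly m a).coeff k = if k < m then a (m - k) else 0 := by
  rw [descPoly, finsetSum_coeff]
  split_ifs with hk
  · rw [sum_eq_single (m - k)]
    · simp [coeff_C_mul, coeff_X_pow, Nat.sub_sub_self hk.le]
    · intro i hi hne
      simp only [mem_Icc] at hi
      simp only [coeff_C_mul, coeff_X_pow]
      rw [if_neg (by omega), mul_zero]
    · intro h; simp only [mem_Icc] at h; omega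
  · refine sum_eq_zero fun i hi => ?_
    simp only [mem_Icc] at hi
    rw [coeff_C_mul, coeff_X_pow, if_neg (by omega), mul_zero]

lemma coeff_descPoly_sub {m i : ℕ} (a : ℕ → R) (hi : 1 ≤ i) (him : i ≤ m) :
    (descPoly m a).coeff (m - i) = a i := by
  rw [coeff_descPoly, if_pos (by omega), Nat.sub_sub_self him]

lemma coeff_X_mul_descPoly_sub {m i : ℕ} (a : ℕ → R) (him : i ≤ m) :
    (X * descPoly m a).coeff (m - i) = if i < m then a (i + 1) else 0 := by
  rcases him.lt_or_eq with him | rfl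
  · rw [if_pos him, show m - i = m - (i + 1) + 1 by omega, coeff_X_mul,
      coeff_descPoly_sub _ (by omega) him]
  · simp

end DescPoly

lemma hasDerivAt_eval_descPoly {𝕜 𝔸 : Type*} [NontriviallyNormedField 𝕜] [NormedCommRing 𝔸]
    [NormedAlgebra 𝕜 𝔸] {m : ℕ} {a : ℕ → 𝕜 → 𝔸} {t : 𝕜}
    (ha : ∀ i ∈ Icc 1 m, DifferentiableAt 𝕜 (a i) t) (x : 𝔸) :
    HasDerivAt (fun s => (descPoly m (a · s)).eval x)
      ((descPoly m (fun i => deriv (a i) t)).eval x) t := by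
  simp only [eval_descPoly]
  exact HasDerivAt.fun_sum fun i hi => (ha i hi).hasDerivAt.mul_const _

section NeumannMoser

variable {n : ℕ} {u v w : ℕ → ℝ → ℂ} {U V W : ℝ → ℂ → ℂ}

lemma neumannMoser_v_eq (hu : ∀ i ∈ Icc 1 n, Differentiable ℝ (u i))
    (hU : ∀ t ξ, U t ξ = ξ ^ n + ∑ i ∈ Icc 1 n, u i t * ξ ^ (n - i))
    (hV : ∀ t ξ, V t ξ = ∑ i ∈ Icc 1 n, v i t * ξ ^ (n - i))
    (hUt : ∀ ξ t, deriv (fun s => U s ξ) t = -2 * V t ξ) (t : ℝ) :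
    ∀ i ∈ Icc 1 n, v i t = -(1 / 2) * deriv (u i) t := by
  have hpoly : descPoly n (fun i => deriv (u i) t) = C (-2) * descPoly n (v · t) := by
    refine Polynomial.funext fun ξ => ?_
    have hU_eval : (fun s => U s ξ) = fun s => ξ ^ n + (descPoly n (u · s)).eval ξ :=
      funext fun s => by rw [hU, eval_descPoly]
    have hderiv := (hasDerivAt_eval_descPoly (fun i hi => (hu i hi) t) ξ).const_add (ξ ^ n)
    calc (descPoly n fun i => deriv (u i) t).eval ξ = deriv (fun s => U s ξ) t := by
          rw [hU_eval, hderiv.deriv]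
      _ = _ := by rw [hUt, hV, eval_mul, eval_C, eval_descPoly]
  intro i hi
  rw [mem_Icc] at hi
  have hcoeff := congrArg (coeff · (n - i)) hpoly
  simp only [coeff_C_mul, coeff_descPoly_sub _ hi.1 hi.2] at hcoeff
  linear_combination (1 / 2 : ℂ) * hcoeff

lemma neumannMoser_w_succ (hv : ∀ i ∈ Icc 1 n, Differentiable ℝ (v i))
    (hU : ∀ t ξ, U t ξ = ξ ^ n + ∑ i ∈ Icc 1 n, u i t * ξ ^ (n - i))
    (hV : ∀ t ξ, V t ξ = ∑ i ∈ Icc 1 n, v i t * ξ ^ (n - i))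
    (hW : ∀ t ξ, W t ξ = ξ ^ (n + 1) + ∑ i ∈ Icc 1 (n + 1), w i t * ξ ^ (n + 1 - i))
    (hVt : ∀ ξ t, deriv (fun s => V s ξ) t = -(ξ + w 1 t - u 1 t) * U t ξ + W t ξ)
    (t : ℝ) {j : ℕ} (hj : 1 ≤ j) (hjn : j ≤ n) :
    w (j + 1) t = deriv (v j) t + (w 1 t - u 1 t) * u j t + if j < n then u (j + 1) t else 0 := by
  have hpoly : descPoly n (fun i => deriv (v i) t) =
      -(X + C (w 1 t - u 1 t)) * (X ^ n + descPoly n (u · t)) +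
        (X ^ (n + 1) + descPoly (n + 1) (w · t)) := by
    refine Polynomial.funext fun ξ => ?_
    have hV_eval : (fun s => V s ξ) = fun s => (descPoly n (v · s)).eval ξ :=
      funext fun s => by rw [hV, eval_descPoly]
    have hderiv := hasDerivAt_eval_descPoly (fun i hi => (hv i hi) t) ξ
    calc (descPoly n fun i => deriv (v i) t).eval ξ = deriv (fun s => V s ξ) t := by
          rw [hV_eval, hderiv.deriv]
      _ = _ := by
          simp only [hVt, hU, hW, eval_add, eval_mul, eval_neg, eval_pow, eval_X, eval_C,
            eval_descPoly]
          ring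
  have hcoeff := congrArg (coeff · (n - j)) hpoly
  have hw_coeff : (descPoly (n + 1) (w · t)).coeff (n - j) = w (j + 1) t := by
    rw [show n - j = n + 1 - (j + 1) by omega, coeff_descPoly_sub _ (by omega) (by omega)]
  simp only [neg_mul, add_mul, mul_add, ← pow_succ', coeff_add, coeff_neg, coeff_C_mul,
    coeff_X_pow, coeff_descPoly_sub _ hj hjn, coeff_X_mul_descPoly_sub _ hjn, hw_coeff,
    if_neg (show n - j ≠ n by omega), if_neg (show n - j ≠ n + 1 by omega)] at hcoeff
  linear_combination -hcoeff

end NeumannMoser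

theorem neumann_moser_vw_as_differential_polynomials_general (n : ℕ) (hn : 1 ≤ n)
    (u v w : ℕ → ℝ → ℂ)
    (hu : ∀ i ∈ Finset.Icc 1 n, Differentiable ℝ (u i) ∧ Differentiable ℝ (deriv (u i)))
    (U V W : ℝ → ℂ → ℂ)
    (hU : ∀ t ξ, U t ξ = ξ ^ n + ∑ i ∈ Finset.Icc 1 n, u i t * ξ ^ (n - i))
    (hV : ∀ t ξ, V t ξ = ∑ i ∈ Finset.Icc 1 n, v i t * ξ ^ (n - i))
    (hW : ∀ t ξ, W t ξ = ξ ^ (n + 1) + ∑ i ∈ Finset.Icc 1 (n + 1), w i t * ξ ^ (n + 1 - i))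
    (hUt : ∀ ξ t, deriv (fun s => U s ξ) t = -2 * V t ξ)
    (hVt : ∀ ξ t, deriv (fun s => V s ξ) t = -(ξ + w 1 t - u 1 t) * U t ξ + W t ξ)
    (Γ : ℝ → ℂ) (hΓ : ∀ t, Γ t = w 1 t - u 1 t) :
    ∀ t : ℝ,
      (∀ i ∈ Finset.Icc 1 n, v i t = -(1 / 2) * deriv (u i) t)
      ∧ w 1 t = Γ t + u 1 t
      ∧ (∀ i, 2 ≤ i → i ≤ n →
          w i t = -(1 / 2) * deriv (deriv (u (i - 1))) t + Γ t * u (i - 1) t + u i t)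
      ∧ w (n + 1) t = -(1 / 2) * deriv (deriv (u n)) t + Γ t * u n t := by
  have hv_eq (i : ℕ) (hi : i ∈ Icc 1 n) : v i = fun s => -(1 / 2) * deriv (u i) s :=
    funext fun s => neumannMoser_v_eq (fun i hi => (hu i hi).1) hU hV hUt s i hi
  have hv_diff (i : ℕ) (hi : i ∈ Icc 1 n) : Differentiable ℝ (v i) := by
    rw [hv_eq i hi]
    exact (hu i hi).2.const_mul _
  have hv_deriv (i : ℕ) (hi : i ∈ Icc 1 n) (t : ℝ) :
      deriv (v i) t = -(1 / 2) * deriv (deriv (u i)) t := by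
    rw [hv_eq i hi, deriv_const_mul _ ((hu i hi).2 t)]
  intro t
  refine ⟨fun i hi => congrFun (hv_eq i hi) t, by rw [hΓ]; ring, fun i hi2 hin => ?_, ?_⟩
  · obtain ⟨j, rfl⟩ : ∃ j, i = j + 1 := ⟨i - 1, by omega⟩
    rw [neumannMoser_w_succ hv_diff hU hV hW hVt t (by omega) (by omega),
      if_pos (by omega : j < n), hv_deriv j (mem_Icc.mpr ⟨by omega, by omega⟩), hΓ, Nat.add_sub_cancel]
  · rw [neumannMoser_w_succ hv_diff hU hV hW hVt t hn le_rfl, if_neg (lt_irrefl n),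
      hv_deriv n (mem_Icc.mpr ⟨hn, le_rfl⟩), hΓ]
    ring

/-- Along a solution of the Neumann–Moser system, the coordinates `v_i` and `w_i` are
differential polynomials in `Γ = w₁ − u₁` and `u₁, …, u_n`:
`v_i = −(1/2)u̇_i`, `w₁ = Γ + u₁`, `w_i = −(1/2)ü_{i−1} + Γu_{i−1} + u_i` (`2 ≤ i ≤ n`),
and `w_{n+1} = −(1/2)ü_n + Γu_n`. -/
theorem neumann_moser_vw_as_differential_polynomials (n : ℕ) (hn : 1 ≤ n)
    (u v w : ℕ → ℝ → ℂ)
    (hu : ∀ i ∈ Finset.Icc 1 n, Differentiable ℝ (u i) ∧ Differentiable ℝ (deriv (u i)))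
    (hv : ∀ i ∈ Finset.Icc 1 n, Differentiable ℝ (v i) ∧ Differentiable ℝ (deriv (v i)))
    (hw : ∀ i ∈ Finset.Icc 1 (n + 1), Differentiable ℝ (w i) ∧ Differentiable ℝ (deriv (w i)))
    (U V W : ℝ → ℂ → ℂ)
    (hU : ∀ t ξ, U t ξ = ξ ^ n + ∑ i ∈ Finset.Icc 1 n, u i t * ξ ^ (n - i))
    (hV : ∀ t ξ, V t ξ = ∑ i ∈ Finset.Icc 1 n, v i t * ξ ^ (n - i))
    (hW : ∀ t ξ, W t ξ = ξ ^ (n + 1) + ∑ i ∈ Finset.Icc 1 (n + 1), w i t * ξ ^ (n + 1 - i))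
    (hUt : ∀ ξ t, deriv (fun s => U s ξ) t = -2 * V t ξ)
    (hVt : ∀ ξ t, deriv (fun s => V s ξ) t = -(ξ + w 1 t - u 1 t) * U t ξ + W t ξ)
    (hWt : ∀ ξ t, deriv (fun s => W s ξ) t = 2 * (ξ + w 1 t - u 1 t) * V t ξ)
    (Γ : ℝ → ℂ) (hΓ : ∀ t, Γ t = w 1 t - u 1 t) :
    ∀ t : ℝ,
      (∀ i ∈ Finset.Icc 1 n, v i t = -(1 / 2) * deriv (u i) t)
      ∧ w 1 t = Γ t + u 1 t
      ∧ (∀ i, 2 ≤ i → i ≤ n →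
          w i t = -(1 / 2) * deriv (deriv (u (i - 1))) t + Γ t * u (i - 1) t + u i t)
      ∧ w (n + 1) t = -(1 / 2) * deriv (deriv (u n)) t + Γ t * u n t :=
  neumann_moser_vw_as_differential_polynomials_general n hn u v w hu U V W hU hV hW hUt hVt Γ hΓ
end

section
/- Let n ≥ 1 and let u₁,…,u_n, v₁,…,v_n, w₁,…,w_{n+1} ∈ ℂ. In ℂ[ξ,η] set U_ξ = ξⁿ + ∑_{i=1}^{n} u_i ξ^{n−i}, V_ξ = ∑_{i=1}^{n} v_i ξ^{n−i}, W_ξ = ξ^{n+1} + ∑_{i=1}^{n+1} w_i ξ^{n+1−i}, and U_η, V_η, W_η the same polynomials in η. Then: (1) ξ − η divides 2(V_ξ U_η − U_ξ V_η), and in the quotient, viewed as a polynomial in η with coefficients in ℂ[ξ], the coefficient of η^{n−1} equals −2V_ξ; (2) ξ − η divides U_ξ W_η − W_ξ U_η, and the coefficient of η^{n−1} in (U_ξ W_η − W_ξ U_η)/(ξ − η) + U_ξ U_η equals −(ξ + w₁ − u₁)U_ξ + W_ξ; (3) ξ − η divides 2(W_ξ V_η − V_ξ W_η), and the coefficient of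 η^{n−1} in 2(W_ξ V_η − V_ξ W_η)/(ξ − η) − 2V_ξ U_η equals 2(ξ + w₁ − u₁)V_ξ. -/
/-!
Write `L = (ξ - η) Q` in `R[ξ][η]`. By the factor theorem `ξ - η` divides `P(ξ) - P(η)`,
hence every bracket `P(ξ) Q(η) - Q(ξ) P(η)`. Comparing coefficients of `η^(k+1)` gives
`Q_k = ξ Q_{k+1} - L_{k+1}`, and since `ξ - η` has leading coefficient `-1` in `η`, `Q` has
lower degree than `L`. So the top coefficients of `Q` are determined by the top two
coefficients of `L`, which only involve the leading coefficients `1, u₁` of `U` and `1, w₁`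
of `W`, together with `deg V < n`.
-/

open Polynomial Finset

namespace Polynomial

section QuotientByCSubX

variable {S : Type*} [CommRing S] {a : S} {L Q : S[X]}

theorem coeff_eq_of_eq_C_sub_X_mul (h : L = (C a - X) * Q) (k : ℕ) :
    Q.coeff k = a * Q.coeff (k + 1) - L.coeff (k + 1) := by
  rw [h, sub_mul, coeff_sub, coeff_C_mul, coeff_X_mul]
  ring

theorem coeff_eq_zero_of_eq_C_sub_X_mul (h : L = (C a - X) * Q) {k : ℕ}
    (hk : L.natDegree ≤ k) : Q.coeff k = 0 := by
  by_contra hQk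
  have hQ : Q ≠ 0 := fun h0 => hQk (by rw [h0, coeff_zero])
  have htop := coeff_eq_of_eq_C_sub_X_mul h Q.natDegree
  have hk' : k ≤ Q.natDegree := le_natDegree_of_ne_zero hQk
  rw [coeff_eq_zero_of_natDegree_lt (p := Q) (Nat.lt_succ_self _),
    coeff_eq_zero_of_natDegree_lt (p := L) (by omega), mul_zero, sub_zero] at htop
  exact leadingCoeff_ne_zero.mpr hQ htop

theorem coeff_eq_neg_coeff_succ_of_eq_C_sub_X_mul (h : L = (C a - X) * Q) {k : ℕ}
    (hk : L.natDegree ≤ k + 1) : Q.coeff k = -L.coeff (k + 1) := by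
  rw [coeff_eq_of_eq_C_sub_X_mul h, coeff_eq_zero_of_eq_C_sub_X_mul h hk, mul_zero, zero_sub]

theorem coeff_eq_of_eq_C_sub_X_mul_of_natDegree_le (h : L = (C a - X) * Q) {k : ℕ}
    (hk : L.natDegree ≤ k + 2) : Q.coeff k = -(a * L.coeff (k + 2)) - L.coeff (k + 1) := by
  rw [coeff_eq_of_eq_C_sub_X_mul h, coeff_eq_neg_coeff_succ_of_eq_C_sub_X_mul h hk, mul_neg]

end QuotientByCSubX

theorem natDegree_two_mul_le {S : Type*} [Semiring S] {P : S[X]} {d : ℕ}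
    (hP : P.natDegree ≤ d) :
    (2 * P).natDegree ≤ d :=
  (natDegree_mul_le_of_le (natDegree_ofNat 2).le hP).trans_eq (zero_add d)

section MumfordBracket

variable {R : Type*} [CommRing R]

/-- `P(ξ) Q(η) - Q(ξ) P(η)` in `R[ξ][η]`. -/
noncomputable def mumfordBracket (P Q : R[X]) : R[X][X] := C P * Q.map C - C Q * P.map C

theorem C_X_sub_X_dvd_C_sub_map (P : R[X]) : (C X - X : R[X][X]) ∣ C P - P.map C := by
  have h := X_sub_C_dvd_sub_C_eval (a := (X : R[X])) (p := P.map C)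
  rw [eval_map, eval₂_C_X] at h
  simpa only [neg_sub] using h.neg_left.neg_right

theorem C_X_sub_X_dvd_mumfordBracket (P Q : R[X]) :
    (C X - X : R[X][X]) ∣ mumfordBracket P Q := by
  have e : mumfordBracket P Q = C Q * (C P - P.map C) - C P * (C Q - Q.map C) := by
    unfold mumfordBracket; ring
  rw [e]
  exact dvd_sub (dvd_mul_of_dvd_right (C_X_sub_X_dvd_C_sub_map P) _)
    (dvd_mul_of_dvd_right (C_X_sub_X_dvd_C_sub_map Q) _)

theorem coeff_mumfordBracket (P Q : R[X]) (k : ℕ) :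
    (mumfordBracket P Q).coeff k = P * C (Q.coeff k) - Q * C (P.coeff k) := by
  rw [mumfordBracket, coeff_sub, coeff_C_mul, coeff_C_mul, coeff_map, coeff_map]

theorem natDegree_mumfordBracket_le {P Q : R[X]} {d : ℕ} (hP : P.natDegree ≤ d)
    (hQ : Q.natDegree ≤ d) : (mumfordBracket P Q).natDegree ≤ d :=
  (natDegree_sub_le_of_le ((natDegree_C_mul_le _ _).trans (natDegree_map_le.trans hQ))
    ((natDegree_C_mul_le _ _).trans (natDegree_map_le.trans hP))).trans_eq (max_self d)

variable {U V W : R[X]} {m : ℕ} {Q : R[X][X]}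

theorem coeff_eq_of_two_mumfordBracket_eq (hU : U.natDegree ≤ m + 1) (hU₁ : U.coeff (m + 1) = 1)
    (hV : V.natDegree ≤ m) (h : 2 * mumfordBracket V U = (C X - X) * Q) :
    Q.coeff m = -2 * V := by
  have hdeg := natDegree_two_mul_le (natDegree_mumfordBracket_le (hV.trans m.le_succ) hU)
  rw [coeff_eq_neg_coeff_succ_of_eq_C_sub_X_mul h hdeg, coeff_ofNat_mul, coeff_mumfordBracket,
    hU₁, coeff_eq_zero_of_natDegree_lt (p := V) (by omega), C_0, C_1]
  ring

theorem coeff_add_of_mumfordBracket_eq (hU : U.natDegree ≤ m + 1) (hU₁ : U.coeff (m + 1) = 1)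
    (hW : W.natDegree ≤ m + 2) (hW₁ : W.coeff (m + 2) = 1)
    (h : mumfordBracket U W = (C X - X) * Q) :
    (Q + C U * U.map C).coeff m = -(X + C (W.coeff (m + 1)) - C (U.coeff m)) * U + W := by
  have hdeg := natDegree_mumfordBracket_le (hU.trans (m + 1).le_succ) hW
  rw [coeff_add, coeff_eq_of_eq_C_sub_X_mul_of_natDegree_le h hdeg, coeff_mumfordBracket,
    coeff_mumfordBracket, coeff_C_mul, coeff_map, hU₁, hW₁,
    coeff_eq_zero_of_natDegree_lt (p := U) (by omega), C_0, C_1]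
  ring

theorem coeff_sub_of_two_mumfordBracket_eq (hV : V.natDegree ≤ m) (hW : W.natDegree ≤ m + 2)
    (hW₁ : W.coeff (m + 2) = 1) (h : 2 * mumfordBracket W V = (C X - X) * Q) :
    (Q - 2 * C V * U.map C).coeff m = 2 * (X + C (W.coeff (m + 1)) - C (U.coeff m)) * V := by
  have hV' : V.natDegree ≤ m + 2 := by omega
  have hdeg := natDegree_two_mul_le (natDegree_mumfordBracket_le hW hV')
  rw [coeff_sub, coeff_eq_of_eq_C_sub_X_mul_of_natDegree_le h hdeg, mul_assoc, coeff_ofNat_mul,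
    coeff_ofNat_mul, coeff_ofNat_mul, coeff_mumfordBracket, coeff_mumfordBracket, coeff_C_mul,
    coeff_map, hW₁, coeff_eq_zero_of_natDegree_lt (p := V) (by omega),
    coeff_eq_zero_of_natDegree_lt (p := V) (by omega), C_0, C_1]
  ring

end MumfordBracket

section MonicCoefficients

variable {R : Type*} [Semiring R] (a : ℕ → R) (m : ℕ)

theorem natDegree_sum_Icc_C_mul_X_pow_sub_le :
    (∑ i ∈ Icc 1 (m + 1), C (a i) * X ^ (m + 1 - i)).natDegree ≤ m :=
  natDegree_sum_le_of_forall_le _ _ fun i hi =>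
    (natDegree_C_mul_X_pow_le _ _).trans (by rw [mem_Icc] at hi; omega)

theorem coeff_sum_Icc_C_mul_X_pow_sub :
    (∑ i ∈ Icc 1 (m + 1), C (a i) * X ^ (m + 1 - i)).coeff m = a 1 := by
  simp only [finsetSum_coeff, coeff_C_mul_X_pow]
  rw [sum_eq_single_of_mem 1 (by simp), if_pos (by omega)]
  intro i hi hi₁
  rw [mem_Icc] at hi
  rw [if_neg (by omega)]

theorem natDegree_X_pow_add_sum_Icc_le :
    (X ^ (m + 1) + ∑ i ∈ Icc 1 (m + 1), C (a i) * X ^ (m + 1 - i)).natDegree ≤ m + 1 :=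
  natDegree_add_le_of_degree_le (natDegree_X_pow_le _)
    ((natDegree_sum_Icc_C_mul_X_pow_sub_le a m).trans m.le_succ)

theorem coeff_X_pow_add_sum_Icc_self :
    (X ^ (m + 1) + ∑ i ∈ Icc 1 (m + 1), C (a i) * X ^ (m + 1 - i)).coeff (m + 1) = 1 := by
  rw [coeff_add, coeff_X_pow_self,
    coeff_eq_zero_of_natDegree_lt
      ((natDegree_sum_Icc_C_mul_X_pow_sub_le a m).trans_lt m.lt_succ_self),
    add_zero]

theorem coeff_X_pow_add_sum_Icc :
    (X ^ (m + 1) + ∑ i ∈ Icc 1 (m + 1), C (a i) * X ^ (m + 1 - i)).coeff m = a 1 := by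
  rw [coeff_add, coeff_X_pow, if_neg m.succ_ne_self.symm, coeff_sum_Icc_C_mul_X_pow_sub, zero_add]

end MonicCoefficients

end Polynomial

/-- Polynomial identities in `ℂ[ξ][η]` (outer variable `η = X`, inner variable `ξ`,
embedded via `C`): `ξ − η` divides the Mumford brackets, and the coefficient of
`η^{n−1}` in the corresponding quotients recovers the right-hand sides of the
Neumann–Moser system. -/
theorem mumford_bracket_eta_coefficients (n : ℕ) (hn : 1 ≤ n) (u v w : ℕ → ℂ)
    (UP VP WP : Polynomial ℂ)
    (hUP : UP = X ^ n + ∑ i ∈ Finset.Icc 1 n, C (u i) * X ^ (n - i))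
    (hVP : VP = ∑ i ∈ Finset.Icc 1 n, C (v i) * X ^ (n - i))
    (hWP : WP = X ^ (n + 1) + ∑ i ∈ Finset.Icc 1 (n + 1), C (w i) * X ^ (n + 1 - i))
    (Uxi Vxi Wxi Ueta Veta Weta : Polynomial (Polynomial ℂ))
    (hUxi : Uxi = C UP) (hVxi : Vxi = C VP) (hWxi : Wxi = C WP)
    (hUeta : Ueta = UP.map (C : ℂ →+* Polynomial ℂ))
    (hVeta : Veta = VP.map (C : ℂ →+* Polynomial ℂ))
    (hWeta : Weta = WP.map (C : ℂ →+* Polynomial ℂ)) :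
    (((C (X : Polynomial ℂ) - X) ∣ 2 * (Vxi * Ueta - Uxi * Veta))
      ∧ ∀ Q : Polynomial (Polynomial ℂ),
          2 * (Vxi * Ueta - Uxi * Veta) = (C (X : Polynomial ℂ) - X) * Q →
          Q.coeff (n - 1) = -2 * VP)
    ∧ (((C (X : Polynomial ℂ) - X) ∣ (Uxi * Weta - Wxi * Ueta))
      ∧ ∀ Q : Polynomial (Polynomial ℂ),
          Uxi * Weta - Wxi * Ueta = (C (X : Polynomial ℂ) - X) * Q →
          (Q + Uxi * Ueta).coeff (n - 1) = -(X + C (w 1) - C (u 1)) * UP + WP)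
    ∧ (((C (X : Polynomial ℂ) - X) ∣ 2 * (Wxi * Veta - Vxi * Weta))
      ∧ ∀ Q : Polynomial (Polynomial ℂ),
          2 * (Wxi * Veta - Vxi * Weta) = (C (X : Polynomial ℂ) - X) * Q →
          (Q - 2 * Vxi * Ueta).coeff (n - 1) = 2 * (X + C (w 1) - C (u 1)) * VP) := by
  obtain ⟨m, rfl⟩ : ∃ m, n = m + 1 := ⟨n - 1, by omega⟩
  subst hUxi hVxi hWxi hUeta hVeta hWeta
  have hU : UP.natDegree ≤ m + 1 := hUP ▸ natDegree_X_pow_add_sum_Icc_le u m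
  have hU₁ : UP.coeff (m + 1) = 1 := hUP ▸ coeff_X_pow_add_sum_Icc_self u m
  have hu : UP.coeff m = u 1 := hUP ▸ coeff_X_pow_add_sum_Icc u m
  have hV : VP.natDegree ≤ m := hVP ▸ natDegree_sum_Icc_C_mul_X_pow_sub_le v m
  have hW : WP.natDegree ≤ m + 2 := hWP ▸ natDegree_X_pow_add_sum_Icc_le w (m + 1)
  have hW₁ : WP.coeff (m + 2) = 1 := hWP ▸ coeff_X_pow_add_sum_Icc_self w (m + 1)
  have hw : WP.coeff (m + 1) = w 1 := hWP ▸ coeff_X_pow_add_sum_Icc w (m + 1)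
  rw [Nat.add_sub_cancel, ← hu, ← hw]
  exact ⟨⟨dvd_mul_of_dvd_right (C_X_sub_X_dvd_mumfordBracket VP UP) 2,
      fun Q hQ => coeff_eq_of_two_mumfordBracket_eq hU hU₁ hV hQ⟩,
    ⟨C_X_sub_X_dvd_mumfordBracket UP WP,
      fun Q hQ => coeff_add_of_mumfordBracket_eq hU hU₁ hW hW₁ hQ⟩,
    ⟨dvd_mul_of_dvd_right (C_X_sub_X_dvd_mumfordBracket WP VP) 2,
      fun Q hQ => coeff_sub_of_two_mumfordBracket_eq hV hW hW₁ hQ⟩⟩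
end
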